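/- arXiv:2006.06060 — 11 statements merged into one kernel-verified Lean document; each statement's English description precedes it below -/
import Mathlib

section
/- Let T be a set and 𝒜 a collection of nonempty subsets of T satisfying the SHAPE condition. Then the family of indicator functions (1_A)_{A ∈ 𝒜}, viewed as elements of the real vector space of functions T → ℝ, is linearly independent over ℝ. -/
/-!
Among the members of `𝒜` carrying a nonzero coefficient in a vanishing linear combination of
indicators, pick one, `A`, maximal for inclusion. The SHAPE condition forbids `A` to be covered by
the others, so some point of `A` lies in none of them; evaluating the combination there shows
that the coefficient of `A` vanishes after all.
-/

open Finset

theorem linearIndependent_of_exists_isolating_point {ι R T : Type*} [Ring R] [NoZeroDivisors R]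
    (v : ι → T → R)
    (h : ∀ s : Finset ι, s.Nonempty → ∃ i ∈ s, ∃ t, v i t ≠ 0 ∧ ∀ j ∈ s, j ≠ i → v j t = 0) :
    LinearIndependent R v := by
  classical
  rw [linearIndependent_iff']
  intro s g hg i hi
  by_contra hgi
  obtain ⟨j, hj, t, hjt, hvanish⟩ :=
    h (s.filter (g · ≠ 0)) ⟨i, mem_filter.2 ⟨hi, hgi⟩⟩
  obtain ⟨hjs, hgj⟩ := mem_filter.1 hj
  have hsum : ∑ k ∈ s, g k * v k t = g j * v j t := by
    refine sum_eq_single_of_mem j hjs fun k hks hkj => ?_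
    by_cases hgk : g k = 0
    · rw [hgk, zero_mul]
    · rw [hvanish k (mem_filter.2 ⟨hks, hgk⟩) hkj, mul_zero]
  have hzero : ∑ k ∈ s, g k * v k t = 0 := by
    simpa [Finset.sum_apply] using congrFun hg t
  exact mul_ne_zero hgj hjt (hsum ▸ hzero)

section Shape

variable {T : Type*}

def ShapeCondition (𝒜 : Set (Set T)) : Prop :=
  ∀ (n : ℕ) (A : Set T) (As : Fin (n + 1) → Set T),
    A ∈ 𝒜 → (∀ i, As i ∈ 𝒜) → A ⊆ ⋃ i, As i → ∃ j, A ⊆ As j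

variable {𝒜 : Set (Set T)}

theorem ShapeCondition.exists_subset_of_subset_iUnion (h𝒜 : ShapeCondition 𝒜)
    {ι : Type*} [Finite ι] [Nonempty ι] {A : Set T} {As : ι → Set T} (hA : A ∈ 𝒜)
    (hAs : ∀ i, As i ∈ 𝒜) (hsub : A ⊆ ⋃ i, As i) : ∃ i, A ⊆ As i := by
  obtain ⟨n, hn⟩ := Nat.exists_eq_succ_of_ne_zero (Nat.card_pos (α := ι)).ne'
  let e := Finite.equivFinOfCardEq hn
  rw [← e.symm.surjective.iUnion_comp] at hsub
  obtain ⟨j, hj⟩ := h𝒜 n A (As ∘ e.symm) hA (fun k => hAs _) hsub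
  exact ⟨e.symm j, hj⟩

theorem ShapeCondition.exists_mem_notMem_of_maximal (h𝒜 : ShapeCondition 𝒜)
    (hne : ∀ A ∈ 𝒜, A.Nonempty) {s : Finset 𝒜} {A : 𝒜} (hA : Maximal (· ∈ s) A) :
    ∃ t ∈ (A : Set T), ∀ B ∈ s, B ≠ A → t ∉ (B : Set T) := by
  by_contra! hcover
  have hsub : (A : Set T) ⊆ ⋃ B : s.erase A, (B : Set T) := fun t ht => by
    obtain ⟨B, hB, hBA, htB⟩ := hcover t ht
    exact Set.mem_iUnion.2 ⟨⟨B, mem_erase.2 ⟨hBA, hB⟩⟩, htB⟩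
  have : Nonempty (s.erase A) := by
    obtain ⟨t, ht⟩ := hne A A.2
    exact (Set.mem_iUnion.1 (hsub ht)).nonempty
  obtain ⟨⟨B, hB⟩, hAB⟩ :=
    h𝒜.exists_subset_of_subset_iUnion A.2 (fun B : s.erase A => (B : 𝒜).2) hsub
  exact ne_of_mem_erase hB (hA.eq_of_ge (mem_of_mem_erase hB) hAB)

end Shape

/-- **SHAPE condition ⇒ linear independence of indicators.**
Let `T` be a set and `𝒜` a collection of nonempty subsets of `T` satisfying the SHAPE
condition. Then the family of indicator functions `(1_A)_{A ∈ 𝒜}`, viewed as elements of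
the real vector space of functions `T → ℝ`, is linearly independent over `ℝ`. -/
theorem stmt_0 {T : Type*} (𝒜 : Set (Set T))
    (hne : ∀ A ∈ 𝒜, A.Nonempty)
    (hshape : ∀ (n : ℕ) (A : Set T) (As : Fin (n + 1) → Set T),
      A ∈ 𝒜 → (∀ i, As i ∈ 𝒜) → A ⊆ ⋃ i, As i → ∃ j, A ⊆ As j) :
    LinearIndependent ℝ
      (fun A : 𝒜 => Set.indicator (A : Set T) (fun _ => (1 : ℝ))) := by
  refine linearIndependent_of_exists_isolating_point _ fun s hs => ?_
  obtain ⟨A, hA⟩ := s.exists_maximal hs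
  obtain ⟨t, htA, ht⟩ := ShapeCondition.exists_mem_notMem_of_maximal hshape hne hA
  refine ⟨A, hA.prop, t, by simp [htA], fun B hB hBA => ?_⟩
  exact Set.indicator_of_notMem (ht B hB hBA) _
end

section
/- Let T be a set and 𝒜 a collection of subsets of T containing ∅, closed under binary intersections, and such that 𝒜 \ {∅} satisfies the SHAPE condition. Let h : Set T → ℝ with h(∅) = 0. Then there exists a function Δ : Set T → ℝ such that Δ(A) = h(A) for all A ∈ 𝒜 and Δ(U₁ ∪ U₂) = Δ(U₁) + Δ(U₂) for all disjoint U₁, U₂ ∈ 𝒞(u); moreover, any two functions with these two properties agree on all of 𝒞(u). -/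
/-- The class `𝒞` of increment sets: sets of the form `A₀ \ (A₁ ∪ ⋯ ∪ A_n)`
with `n ∈ ℕ` and `A₀, …, A_n ∈ 𝒜`. -/
def classC {T : Type*} (𝒜 : Set (Set T)) : Set (Set T) :=
  {C | ∃ (A₀ : Set T) (n : ℕ) (As : Fin n → Set T),
    A₀ ∈ 𝒜 ∧ (∀ i, As i ∈ 𝒜) ∧ C = A₀ \ ⋃ i, As i}

/-- The class `𝒞(u)` of finite unions of elements of `𝒞`. -/
def classCu {T : Type*} (𝒜 : Set (Set T)) : Set (Set T) :=
  {U | ∃ (n : ℕ) (Cs : Fin n → Set T), (∀ i, Cs i ∈ classC 𝒜) ∧ U = ⋃ i, Cs i}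

/-!
Existence: by SHAPE, the indicators of the nonempty members of `𝒜` are linearly independent in
`T → ℝ`: a maximal member of a finite subfamily has a point outside all the others, and evaluation
there kills every combination of the others. So `1_A ↦ h A` extends to a linear functional `f`,
and `Δ U := f 1_U` is additive on all disjoint pairs.

Uniqueness: `𝒞(u)` is a ring of sets, so the difference `D` of two solutions is modular on it:
`D (s ∪ t) + D (s ∩ t) = D s + D t`. If `D` vanishes on an intersection-closed family inside the
ring, induction on the number of pieces shows that it vanishes on finite unions from that family,
hence also on `s \ (s₁ ∪ ⋯ ∪ sₙ)`. Applied to `𝒜` this gives `D = 0` on `𝒞`, and applied to `𝒞` it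
gives `D = 0` on `𝒞(u)`.
-/

open Set MeasureTheory

def SatisfiesShape {T : Type*} (𝒮 : Set (Set T)) : Prop :=
  ∀ (n : ℕ) (A : Set T) (As : Fin (n + 1) → Set T),
    A ∈ 𝒮 → (∀ i, As i ∈ 𝒮) → A ⊆ ⋃ i, As i → ∃ j, A ⊆ As j

def IsAdditiveOn {α G : Type*} [Add G] (R : Set (Set α)) (D : Set α → G) : Prop :=
  ∀ s ∈ R, ∀ t ∈ R, Disjoint s t → D (s ∪ t) = D s + D t

namespace IsAdditiveOn

variable {α G : Type*} [AddCommGroup G] {R 𝒮 : Set (Set α)} {D D' : Set α → G} {s t : Set α}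

theorem mono {R' : Set (Set α)} (hD : IsAdditiveOn R D) (h : R' ⊆ R) : IsAdditiveOn R' D :=
  fun s hs t ht hst => hD s (h hs) t (h ht) hst

theorem sub (hD : IsAdditiveOn R D) (hD' : IsAdditiveOn R D') : IsAdditiveOn R (D - D') :=
  fun s hs t ht hst => by
    simp only [Pi.sub_apply, hD s hs t ht hst, hD' s hs t ht hst]
    abel

theorem map_empty (hD : IsAdditiveOn R D) (h : ∅ ∈ R) : D ∅ = 0 := by
  simpa using hD ∅ h ∅ h (disjoint_empty _)

theorem sdiff_add_inter (hR : IsSetRing R) (hD : IsAdditiveOn R D) (hs : s ∈ R) (ht : t ∈ R) :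
    D (s \ t) + D (s ∩ t) = D s := by
  rw [← hD _ (hR.sdiff_mem hs ht) _ (hR.inter_mem hs ht) disjoint_sdiff_inter, sdiff_union_inter]

theorem union_add_inter (hR : IsSetRing R) (hD : IsAdditiveOn R D) (hs : s ∈ R) (ht : t ∈ R) :
    D (s ∪ t) + D (s ∩ t) = D s + D t := by
  rw [← hD.sdiff_add_inter hR ht hs, ← union_sdiff_self,
    hD _ hs _ (hR.sdiff_mem ht hs) disjoint_sdiff_right, inter_comm, add_assoc]

theorem iUnion_eq_zero (hR : IsSetRing R) (hD : IsAdditiveOn R D) (h𝒮R : 𝒮 ⊆ R)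
    (h𝒮 : ∀ s ∈ 𝒮, ∀ t ∈ 𝒮, s ∩ t ∈ 𝒮) (hD0 : ∀ s ∈ 𝒮, D s = 0)
    {ι : Type*} [Fintype ι] (f : ι → Set α) (hf : ∀ i, f i ∈ 𝒮) : D (⋃ i, f i) = 0 := by
  classical
  suffices key : ∀ (I : Finset ι) (f : ι → Set α), (∀ i ∈ I, f i ∈ 𝒮) → D (⋃ i ∈ I, f i) = 0 by
    simpa using key Finset.univ f fun i _ => hf i
  intro I
  induction I using Finset.induction_on with
  | empty => intro f _; simpa using hD.map_empty hR.empty_mem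
  | insert a I _ ih =>
    intro f hf
    have ha : f a ∈ 𝒮 := hf a (Finset.mem_insert_self a I)
    have hI : ∀ i ∈ I, f i ∈ 𝒮 := fun i hi => hf i (Finset.mem_insert_of_mem hi)
    have hmod := hD.union_add_inter hR (h𝒮R ha) (hR.biUnion_mem I fun i hi => h𝒮R (hI i hi))
    rw [inter_iUnion₂, ih _ fun i hi => h𝒮 _ ha _ (hI i hi), ih f hI, hD0 _ ha, add_zero,
      add_zero] at hmod
    rwa [Finset.set_biUnion_insert]

theorem sdiff_iUnion_eq_zero (hR : IsSetRing R) (hD : IsAdditiveOn R D) (h𝒮R : 𝒮 ⊆ R)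
    (h𝒮 : ∀ s ∈ 𝒮, ∀ t ∈ 𝒮, s ∩ t ∈ 𝒮) (hD0 : ∀ s ∈ 𝒮, D s = 0)
    {ι : Type*} [Fintype ι] (hs : s ∈ 𝒮) (f : ι → Set α) (hf : ∀ i, f i ∈ 𝒮) :
    D (s \ ⋃ i, f i) = 0 := by
  have hU : ⋃ i, f i ∈ R := by simpa using hR.biUnion_mem Finset.univ fun i _ => h𝒮R (hf i)
  have hsplit := hD.sdiff_add_inter hR (h𝒮R hs) hU
  rwa [inter_iUnion, hD.iUnion_eq_zero hR h𝒮R h𝒮 hD0 _ fun i => h𝒮 _ hs _ (hf i), hD0 s hs,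
    add_zero] at hsplit

end IsAdditiveOn

section classC

variable {T : Type*} {𝒜 : Set (Set T)} {s t : Set T}

theorem sdiff_iUnion_mem_classC {ι : Type*} [Finite ι] {A : Set T} (hA : A ∈ 𝒜)
    {f : ι → Set T} (hf : ∀ i, f i ∈ 𝒜) : A \ ⋃ i, f i ∈ classC 𝒜 := by
  obtain ⟨n, ⟨e⟩⟩ := Finite.exists_equiv_fin ι
  exact ⟨A, n, f ∘ e.symm, hA, fun i => hf _,
    by rw [Function.comp_def, e.symm.surjective.iUnion_comp]⟩

theorem iUnion_mem_classCu_of_mem_classC {ι : Type*} [Finite ι] {f : ι → Set T}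
    (hf : ∀ i, f i ∈ classC 𝒜) : ⋃ i, f i ∈ classCu 𝒜 := by
  obtain ⟨n, ⟨e⟩⟩ := Finite.exists_equiv_fin ι
  exact ⟨n, f ∘ e.symm, fun i => hf _, by rw [Function.comp_def, e.symm.surjective.iUnion_comp]⟩

theorem subset_classC : 𝒜 ⊆ classC 𝒜 := fun A hA => by
  simpa using sdiff_iUnion_mem_classC hA (f := (Empty.elim : Empty → Set T)) Empty.rec

theorem classC_subset_classCu : classC 𝒜 ⊆ classCu 𝒜 := fun C hC => by
  simpa only [iUnion_const] using
    iUnion_mem_classCu_of_mem_classC (f := fun _ : Unit => C) fun _ => hC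

theorem inter_mem_classC (hinter : ∀ A ∈ 𝒜, ∀ B ∈ 𝒜, A ∩ B ∈ 𝒜) (hs : s ∈ classC 𝒜)
    (ht : t ∈ classC 𝒜) : s ∩ t ∈ classC 𝒜 := by
  obtain ⟨A, m, f, hA, hf, rfl⟩ := hs
  obtain ⟨B, n, g, hB, hg, rfl⟩ := ht
  convert sdiff_iUnion_mem_classC (hinter A hA B hB) (f := Sum.elim f g)
    (Sum.forall.2 ⟨hf, hg⟩) using 1
  rw [iUnion_sumElim]
  ext x
  simp only [mem_inter_iff, mem_sdiff, mem_union]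
  tauto

theorem sdiff_mem_classC (hs : s ∈ classC 𝒜) {A : Set T} (hA : A ∈ 𝒜) : s \ A ∈ classC 𝒜 := by
  obtain ⟨A₀, n, f, hA₀, hf, rfl⟩ := hs
  convert sdiff_iUnion_mem_classC hA₀ (f := Sum.elim f fun _ : Unit => A)
    (Sum.forall.2 ⟨hf, fun _ => hA⟩) using 1
  rw [iUnion_sumElim, iUnion_const, sdiff_sdiff]

theorem sdiff_mem_classCu_of_mem_classC (hinter : ∀ A ∈ 𝒜, ∀ B ∈ 𝒜, A ∩ B ∈ 𝒜)
    (hs : s ∈ classC 𝒜) (ht : t ∈ classC 𝒜) : s \ t ∈ classCu 𝒜 := by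
  obtain ⟨B, n, g, hB, hg, rfl⟩ := ht
  convert iUnion_mem_classCu_of_mem_classC
    (f := fun o : Option (Fin n) => o.elim (s \ B) fun j => s ∩ g j)
    (by rintro (_ | j); exacts [sdiff_mem_classC hs hB,
      inter_mem_classC hinter hs (subset_classC (hg j))]) using 1
  rw [iUnion_option]
  ext x
  simp only [mem_sdiff, mem_iUnion, mem_union, mem_inter_iff, Option.elim]
  tauto

theorem iUnion_mem_classCu {ι : Type*} [Finite ι] {U : ι → Set T} (hU : ∀ i, U i ∈ classCu 𝒜) :
    ⋃ i, U i ∈ classCu 𝒜 := by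
  choose n f hf hUf using hU
  have := iUnion_mem_classCu_of_mem_classC (f := fun p : Σ i, Fin (n i) => f p.1 p.2)
    fun p => hf _ _
  simp_rw [hUf]
  rwa [iUnion_sigma] at this

theorem sdiff_mem_classCu (hinter : ∀ A ∈ 𝒜, ∀ B ∈ 𝒜, A ∩ B ∈ 𝒜) (hs : s ∈ classCu 𝒜)
    (ht : t ∈ classC 𝒜) : s \ t ∈ classCu 𝒜 := by
  obtain ⟨n, f, hf, rfl⟩ := hs
  rw [iUnion_sdiff]
  exact iUnion_mem_classCu fun i => sdiff_mem_classCu_of_mem_classC hinter (hf i) ht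

theorem isSetRing_classCu (hinter : ∀ A ∈ 𝒜, ∀ B ∈ 𝒜, A ∩ B ∈ 𝒜) : IsSetRing (classCu 𝒜) where
  empty_mem := ⟨0, Fin.elim0, Fin.rec0, by simp⟩
  union_mem s t hs ht := by
    rw [union_eq_iUnion]
    exact iUnion_mem_classCu (Bool.forall_bool.2 ⟨ht, hs⟩)
  sdiff_mem := by
    classical
    rintro s _ hs ⟨n, g, hg, rfl⟩
    suffices key : ∀ (I : Finset (Fin n)) (s : Set T),
        s ∈ classCu 𝒜 → s \ ⋃ j ∈ I, g j ∈ classCu 𝒜 by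
      simpa using key Finset.univ s hs
    intro I
    induction I using Finset.induction_on with
    | empty => simp
    | insert a I _ ih =>
      intro s hs
      rw [Finset.set_biUnion_insert, ← sdiff_sdiff]
      exact ih _ (sdiff_mem_classCu hinter hs (hg a))

theorem IsAdditiveOn.eq_zero_of_mem_classCu {G : Type*} [AddCommGroup G]
    (hinter : ∀ A ∈ 𝒜, ∀ B ∈ 𝒜, A ∩ B ∈ 𝒜) {D : Set T → G} (hD : IsAdditiveOn (classCu 𝒜) D)
    (hD0 : ∀ A ∈ 𝒜, D A = 0) {U : Set T} (hU : U ∈ classCu 𝒜) : D U = 0 := by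
  have hR := isSetRing_classCu hinter
  have hC : ∀ C ∈ classC 𝒜, D C = 0 := by
    rintro _ ⟨A, n, f, hA, hf, rfl⟩
    exact hD.sdiff_iUnion_eq_zero hR (subset_classC.trans classC_subset_classCu) hinter hD0 hA f hf
  obtain ⟨n, f, hf, rfl⟩ := hU
  exact hD.iUnion_eq_zero hR classC_subset_classCu (fun _ hs _ ht => inter_mem_classC hinter hs ht)
    hC f hf

end classC

theorem LinearIndepOn.exists_linearMap_eq {ι K V V' : Type*} [Field K] [AddCommGroup V]
    [Module K V] [AddCommGroup V'] [Module K V'] {v : ι → V} {s : Set ι}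
    (hv : LinearIndepOn K v s) (g : ι → V') : ∃ f : V →ₗ[K] V', ∀ i ∈ s, f (v i) = g i := by
  obtain ⟨f, hf⟩ :=
    LinearMap.exists_extend ((Finsupp.linearCombination K fun i : s => g i).comp hv.repr)
  refine ⟨f, fun i hi => ?_⟩
  let x : Submodule.span K (range fun j : s => v j) := ⟨v i, Submodule.subset_span ⟨⟨i, hi⟩, rfl⟩⟩
  simpa [x, hv.repr_eq_single ⟨i, hi⟩ x rfl] using LinearMap.congr_fun hf x

namespace SatisfiesShape

variable {T : Type*} {𝒮 : Set (Set T)}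

theorem exists_subset_of_subset_iUnion (h : SatisfiesShape 𝒮) {ι : Type*} [Finite ι]
    [Nonempty ι] {A : Set T} (hA : A ∈ 𝒮) {f : ι → Set T} (hf : ∀ i, f i ∈ 𝒮)
    (hAf : A ⊆ ⋃ i, f i) : ∃ i, A ⊆ f i := by
  obtain ⟨n, ⟨e⟩⟩ := Finite.exists_equiv_fin ι
  cases n with
  | zero => exact (e (Classical.arbitrary ι)).elim0
  | succ n =>
    obtain ⟨j, hj⟩ := h n A (f ∘ e.symm) hA (fun j => hf _)
      (by rwa [Function.comp_def, e.symm.surjective.iUnion_comp])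
    exact ⟨e.symm j, hj⟩

theorem exists_mem_forall_notMem_of_maximal (h : SatisfiesShape 𝒮) (h𝒮 : ∅ ∉ 𝒮)
    {I : Finset (Set T)} (hI : ↑I ⊆ 𝒮) {A : Set T} (hA : Maximal (· ∈ I) A) :
    ∃ x ∈ A, ∀ B ∈ I.erase A, x ∉ B := by
  by_contra! hcov
  have hsub : A ⊆ ⋃ B : I.erase A, (B : Set T) := fun x hx => by
    obtain ⟨B, hB, hxB⟩ := hcov x hx
    exact mem_iUnion.2 ⟨⟨B, hB⟩, hxB⟩
  have : Nonempty (I.erase A) := by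
    obtain ⟨x, hx⟩ := nonempty_iff_ne_empty.2 fun hA0 => h𝒮 (hA0 ▸ hI hA.1)
    obtain ⟨B, hB, -⟩ := hcov x hx
    exact ⟨⟨B, hB⟩⟩
  obtain ⟨⟨B, hB⟩, hAB⟩ := h.exists_subset_of_subset_iUnion (hI hA.1)
    (fun B => hI (Finset.mem_of_mem_erase B.2)) hsub
  exact (Finset.mem_erase.1 hB).1 (hA.eq_of_superset (Finset.mem_of_mem_erase hB) hAB)

theorem linearIndepOn_indicator (K : Type*) [Field K] (h : SatisfiesShape 𝒮) (h𝒮 : ∅ ∉ 𝒮) :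
    LinearIndepOn K (fun A : Set T => A.indicator (1 : T → K)) 𝒮 := by
  classical
  rw [linearIndepOn_iff_linearIndepOn_finset]
  intro I
  induction I using Finset.strongInduction with
  | H I ih =>
    intro hI
    rcases I.eq_empty_or_nonempty with rfl | hIne
    · simp
    obtain ⟨A, hA⟩ := I.exists_maximal hIne
    obtain ⟨x, hxA, hx⟩ := h.exists_mem_forall_notMem_of_maximal h𝒮 hI hA
    rw [← Finset.insert_erase hA.1, Finset.coe_insert, linearIndepOn_insert (by simp)]
    refine ⟨ih _ (Finset.erase_ssubset hA.1) ((Finset.coe_subset.2 (I.erase_subset A)).trans hI),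
      fun hspan => ?_⟩
    have hker : Submodule.span K ((fun B : Set T => B.indicator (1 : T → K)) '' ↑(I.erase A)) ≤
        LinearMap.ker (LinearMap.proj x) := by
      rw [Submodule.span_le]
      rintro _ ⟨B, hB, rfl⟩
      simp [indicator_of_notMem (hx B hB)]
    simpa [indicator_of_mem hxA] using hker hspan

end SatisfiesShape

theorem exists_isAdditiveOn_univ_of_satisfiesShape {T K : Type*} [Field K] {𝒜 : Set (Set T)}
    {h : Set T → K} (hshape : SatisfiesShape (𝒜 \ {∅})) (hh : h ∅ = 0) :
    ∃ Δ : Set T → K, (∀ A ∈ 𝒜, Δ A = h A) ∧ IsAdditiveOn univ Δ := by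
  obtain ⟨f, hf⟩ :=
    (hshape.linearIndepOn_indicator K fun h0 => h0.2 (mem_singleton _)).exists_linearMap_eq h
  refine ⟨fun U => f (U.indicator 1), fun A hA => ?_, fun U _ V _ hUV => ?_⟩
  · rcases eq_or_ne A ∅ with rfl | hA0
    · change f ((∅ : Set T).indicator 1) = h ∅
      rw [indicator_empty', map_zero, hh]
    · exact hf A ⟨hA, hA0⟩
  · simp only [← map_add]
    exact congrArg f (indicator_union_of_disjoint hUV 1)

theorem stmt_2_general {T : Type*} (𝒜 : Set (Set T)) (h : Set T → ℝ)
    (hinter : ∀ A ∈ 𝒜, ∀ B ∈ 𝒜, A ∩ B ∈ 𝒜)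
    (hshape : ∀ (n : ℕ) (A : Set T) (As : Fin (n + 1) → Set T),
      A ∈ 𝒜 \ {∅} → (∀ i, As i ∈ 𝒜 \ {∅}) → A ⊆ ⋃ i, As i → ∃ j, A ⊆ As j)
    (hh : h ∅ = 0) :
    (∃ Δ : Set T → ℝ,
      (∀ A ∈ 𝒜, Δ A = h A) ∧
      (∀ U₁ ∈ classCu 𝒜, ∀ U₂ ∈ classCu 𝒜, Disjoint U₁ U₂ →
        Δ (U₁ ∪ U₂) = Δ U₁ + Δ U₂)) ∧
    (∀ Δ₁ Δ₂ : Set T → ℝ,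
      ((∀ A ∈ 𝒜, Δ₁ A = h A) ∧
        (∀ U₁ ∈ classCu 𝒜, ∀ U₂ ∈ classCu 𝒜, Disjoint U₁ U₂ →
          Δ₁ (U₁ ∪ U₂) = Δ₁ U₁ + Δ₁ U₂)) →
      ((∀ A ∈ 𝒜, Δ₂ A = h A) ∧
        (∀ U₁ ∈ classCu 𝒜, ∀ U₂ ∈ classCu 𝒜, Disjoint U₁ U₂ →
          Δ₂ (U₁ ∪ U₂) = Δ₂ U₁ + Δ₂ U₂)) →
      ∀ U ∈ classCu 𝒜, Δ₁ U = Δ₂ U) := by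
  refine ⟨?_, fun Δ₁ Δ₂ ⟨h₁, hadd₁⟩ ⟨h₂, hadd₂⟩ U hU => ?_⟩
  · obtain ⟨Δ, hΔh, hΔ⟩ := exists_isAdditiveOn_univ_of_satisfiesShape hshape hh
    exact ⟨Δ, hΔh, hΔ.mono (subset_univ _)⟩
  · have hD0 : ∀ A ∈ 𝒜, (Δ₁ - Δ₂) A = 0 := fun A hA => by simp [h₁ A hA, h₂ A hA]
    exact sub_eq_zero.1 ((IsAdditiveOn.sub hadd₁ hadd₂).eq_zero_of_mem_classCu hinter hD0 hU)

/-- **Existence and uniqueness of the increment map.**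
If `∅ ∈ 𝒜`, `𝒜` is closed under binary intersections, `𝒜 \ {∅}` satisfies SHAPE, and
`h ∅ = 0`, then there is a map `Δ : Set T → ℝ` extending `h` on `𝒜` that is additive on
disjoint elements of `𝒞(u)`; moreover any two such maps agree on `𝒞(u)`. -/
theorem stmt_2 {T : Type*} (𝒜 : Set (Set T)) (h : Set T → ℝ)
    (hempty : (∅ : Set T) ∈ 𝒜)
    (hinter : ∀ A ∈ 𝒜, ∀ B ∈ 𝒜, A ∩ B ∈ 𝒜)
    (hshape : ∀ (n : ℕ) (A : Set T) (As : Fin (n + 1) → Set T),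
      A ∈ 𝒜 \ {∅} → (∀ i, As i ∈ 𝒜 \ {∅}) → A ⊆ ⋃ i, As i → ∃ j, A ⊆ As j)
    (hh : h ∅ = 0) :
    (∃ Δ : Set T → ℝ,
      (∀ A ∈ 𝒜, Δ A = h A) ∧
      (∀ U₁ ∈ classCu 𝒜, ∀ U₂ ∈ classCu 𝒜, Disjoint U₁ U₂ →
        Δ (U₁ ∪ U₂) = Δ U₁ + Δ U₂)) ∧
    (∀ Δ₁ Δ₂ : Set T → ℝ,
      ((∀ A ∈ 𝒜, Δ₁ A = h A) ∧
        (∀ U₁ ∈ classCu 𝒜, ∀ U₂ ∈ classCu 𝒜, Disjoint U₁ U₂ →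
          Δ₁ (U₁ ∪ U₂) = Δ₁ U₁ + Δ₁ U₂)) →
      ((∀ A ∈ 𝒜, Δ₂ A = h A) ∧
        (∀ U₁ ∈ classCu 𝒜, ∀ U₂ ∈ classCu 𝒜, Disjoint U₁ U₂ →
          Δ₂ (U₁ ∪ U₂) = Δ₂ U₁ + Δ₂ U₂)) →
      ∀ U ∈ classCu 𝒜, Δ₁ U = Δ₂ U) :=
  stmt_2_general 𝒜 h hinter hshape hh
end

section
/- Let T be a set and 𝒜 a collection of subsets of T containing ∅ and closed under binary intersections. Then every function f in the ℝ-linear span of {1_A : A ∈ 𝒜} inside the functions T → ℝ can be written as f = Σ_{i=1}^n c_i · 1_{C_i}, where n ∈ ℕ, c_1, …, c_n are nonzero real numbers, and C_1, …, C_n ∈ 𝒞 are pairwise disjoint. -/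
/-- **`𝒞`-representation of simple functions.**
If `∅ ∈ 𝒜` and `𝒜` is closed under binary intersections, then every `f` in the
`ℝ`-linear span of `{1_A : A ∈ 𝒜}` can be written as `f = ∑_{i=1}^n c_i • 1_{C_i}` with
nonzero reals `c_i` and pairwise disjoint `C_i ∈ 𝒞`. -/
theorem stmt_3 {T : Type*} (𝒜 : Set (Set T))
    (hempty : (∅ : Set T) ∈ 𝒜)
    (hinter : ∀ A ∈ 𝒜, ∀ B ∈ 𝒜, A ∩ B ∈ 𝒜)
    (f : T → ℝ)
    (hf : f ∈ Submodule.span ℝ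
      ((fun A : Set T => Set.indicator A (fun _ => (1 : ℝ))) '' 𝒜)) :
    ∃ (n : ℕ) (c : Fin n → ℝ) (C : Fin n → Set T),
      (∀ i, c i ≠ 0) ∧ (∀ i, C i ∈ classC 𝒜) ∧
      (∀ i j, i ≠ j → Disjoint (C i) (C j)) ∧
      f = ∑ i, c i • Set.indicator (C i) (fun _ => (1 : ℝ)) := by
  classical
  obtain ⟨m, c, g, hsum⟩ := Submodule.mem_span_set'.mp hf
  choose B hB hBind using fun i => (g i).2
  have hf' : f = ∑ i, c i • Set.indicator (B i) (fun _ => (1 : ℝ)) := by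
    rw [← hsum]
    exact Finset.sum_congr rfl (fun i _ => congrArg (fun v => c i • v) (hBind i).symm)
  -- atoms
  set atom : Finset (Fin m) → Set T := fun S =>
    if S = ∅ then ∅ else {x | ∀ k, x ∈ B k ↔ k ∈ S} with hatom
  set coef : Finset (Fin m) → ℝ := fun S => ∑ k ∈ S, c k with hcoef
  have hInter : ∀ S : Finset (Fin m), S.Nonempty → ⋂ k ∈ S, B k ∈ 𝒜 := by
    intro S hS
    induction hS using Finset.Nonempty.cons_induction with
    | singleton a => simpa using hB a
    | cons a s ha hs ih =>
        rw [Finset.cons_eq_insert, Finset.set_biInter_insert]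
        exact hinter _ (hB a) _ ih
  have hClass : ∀ S, atom S ∈ classC 𝒜 := by
    intro S
    by_cases hS : S = ∅
    · exact ⟨∅, 0, Fin.elim0, hempty, fun i => i.elim0, by simp [hatom, hS]⟩
    · have hAs : ∀ k : Fin m, (if k ∈ S then (∅ : Set T) else B k) ∈ 𝒜 := by
        intro k; by_cases hk : k ∈ S <;> simp [hk, hempty, hB k]
      refine ⟨⋂ k ∈ S, B k, m, fun k => if k ∈ S then ∅ else B k,
        hInter S (Finset.nonempty_of_ne_empty hS), hAs, ?_⟩
      simp only [hatom, if_neg hS]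
      ext x
      simp only [Set.mem_setOf_eq, Set.mem_diff, Set.mem_iUnion, Set.mem_iInter, not_exists]
      constructor
      · intro h
        refine ⟨fun k hk => (h k).mpr hk, fun k => ?_⟩
        split_ifs with hk
        · simp
        · intro hx; exact hk ((h k).mp hx)
      · rintro ⟨h1, h2⟩ k
        constructor
        · intro hx
          by_contra hk
          have h2k := h2 k
          rw [if_neg hk] at h2k
          exact h2k hx
        · exact h1 k
  have hDisj : ∀ S S', S ≠ S' → Disjoint (atom S) (atom S') := by
    intro S S' hne
    rw [Set.disjoint_left]
    intro x hxS hxS'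
    by_cases hS : S = ∅
    · simp [hatom, hS] at hxS
    by_cases hS' : S' = ∅
    · simp [hatom, hS'] at hxS'
    simp only [hatom, if_neg hS, if_neg hS', Set.mem_setOf_eq] at hxS hxS'
    exact hne (Finset.ext fun k => (hxS k).symm.trans (hxS' k))
  have h3 : f = ∑ S : Finset (Fin m), coef S • Set.indicator (atom S) (fun _ => (1 : ℝ)) := by
    funext x
    simp only [Finset.sum_apply, Pi.smul_apply, smul_eq_mul]
    set Sx : Finset (Fin m) := Finset.univ.filter (fun k => x ∈ B k) with hSx
    have hmem : ∀ k, x ∈ B k ↔ k ∈ Sx := by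
      intro k; simp [hSx]
    rw [Finset.sum_eq_single Sx]
    · have hfx : f x = coef Sx := by
        rw [hf']
        simp only [Finset.sum_apply, Pi.smul_apply, smul_eq_mul, hcoef, hSx,
          Finset.sum_filter]
        refine Finset.sum_congr rfl fun k _ => ?_
        by_cases hx : x ∈ B k <;> simp [Set.indicator, hx]
      by_cases hS : Sx = ∅
      · rw [hfx]
        simp [hcoef, hS, hatom]
      · rw [hfx]
        have hx : x ∈ atom Sx := by
          simp only [hatom, if_neg hS, Set.mem_setOf_eq]
          exact hmem
        simp [Set.indicator, hx]
    · intro S _ hne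
      have hx : x ∉ atom S := by
        by_cases hS : S = ∅
        · simp [hatom, hS]
        · simp only [hatom, if_neg hS, Set.mem_setOf_eq]
          intro h
          exact hne (Finset.ext fun k => (h k).symm.trans (hmem k))
      simp [Set.indicator, hx]
    · simp
  -- reindex, dropping zero coefficients
  refine ⟨(Finset.univ.filter (fun S => coef S ≠ 0)).card,
    fun i => coef ((Finset.univ.filter (fun S => coef S ≠ 0)).equivFin.symm i),
    fun i => atom ((Finset.univ.filter (fun S => coef S ≠ 0)).equivFin.symm i),
    fun i => ?_, fun i => hClass _, fun i j hij => ?_, ?_⟩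
  · exact (Finset.mem_filter.mp
      ((Finset.univ.filter (fun S => coef S ≠ 0)).equivFin.symm i).2).2
  · refine hDisj _ _ fun h => hij ?_
    exact (Finset.univ.filter (fun S => coef S ≠ 0)).equivFin.symm.injective (Subtype.ext h)
  · rw [h3]
    have hne : ∀ S ∈ Finset.univ, (coef S • Set.indicator (atom S) (fun _ => (1:ℝ))) ≠ 0 →
        coef S ≠ 0 := fun S _ h hc => h (by simp [hc])
    rw [← Finset.sum_filter_of_ne hne, ← Finset.sum_coe_sort]
    exact (Equiv.sum_comp (Finset.univ.filter (fun S => coef S ≠ 0)).equivFin.symm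
      (fun x => coef x • Set.indicator (atom x) (fun _ => (1:ℝ)))).symm
end

section
/- Let T be a set, 𝒜 a collection of subsets of T closed under countable intersections, and d a pseudometric on 𝒜 that is outer continuous and has the midpoint property. Then for all A₀, A₁ ∈ 𝒜 with A₀ ⊆ A₁, A₀ ≠ A₁ and d(A₀, A₁) > 0, there exists a map γ : [0,1] → Set T such that γ(x) ∈ 𝒜 for every x ∈ [0,1], γ(0) = A₀, γ(1) = A₁, γ(x) ⊆ γ(y) whenever 0 ≤ x ≤ y ≤ 1, and d(γ(x), γ(y)) = d(A₀, A₁)·|x − y| for all x, y ∈ [0,1] (an increasing constant-speed geodesic from A₀ to A₁). -/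
/-!
Bisect repeatedly: the midpoint property turns `A₀ ⊆ A₁` into increasing chains
`A₀ = Cₙ(0) ⊆ Cₙ(1) ⊆ ⋯ ⊆ Cₙ(2ⁿ) = A₁` with consecutive distances `d(A₀, A₁) / 2ⁿ`, each refining
the previous one, and by the triangle inequality each of them is a geodesic on the grid `k / 2ⁿ`.
Put `γ(x) = ⋂ₙ Cₙ(⌈x 2ⁿ⌉)`: the grid points `⌈x 2ⁿ⌉ / 2ⁿ` approach `x` from above, so these sets
decrease, and outer continuity lets the grid distances pass to the limit.
-/

open Filter Topology

structure IsPseudometricOn {α : Type*} (S : Set α) (d : α → α → ℝ) : Prop where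
  dist_self : ∀ a ∈ S, d a a = 0
  dist_comm : ∀ a ∈ S, ∀ b ∈ S, d a b = d b a
  dist_triangle : ∀ a ∈ S, ∀ b ∈ S, ∀ c ∈ S, d a c ≤ d a b + d b c

namespace IsPseudometricOn

variable {α : Type*} {S : Set α} {d : α → α → ℝ}

theorem abs_sub_le (hd : IsPseudometricOn S d) {a b a' b' : α} (ha : a ∈ S) (hb : b ∈ S)
    (ha' : a' ∈ S) (hb' : b' ∈ S) : |d a b - d a' b'| ≤ d a a' + d b b' := by
  have := hd.dist_triangle _ ha _ ha' _ hb
  have := hd.dist_triangle _ ha' _ hb' _ hb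
  have := hd.dist_triangle _ ha' _ ha _ hb'
  have := hd.dist_triangle _ ha _ hb _ hb'
  have := hd.dist_comm _ ha _ ha'
  have := hd.dist_comm _ hb _ hb'
  rw [abs_sub_le_iff]
  constructor <;> linarith

theorem tendsto_dist (hd : IsPseudometricOn S d) {u v : ℕ → α} {x y : α} (hu : ∀ n, u n ∈ S)
    (hv : ∀ n, v n ∈ S) (hx : x ∈ S) (hy : y ∈ S)
    (hux : Tendsto (fun n => d (u n) x) atTop (𝓝 0))
    (hvy : Tendsto (fun n => d (v n) y) atTop (𝓝 0)) :
    Tendsto (fun n => d (u n) (v n)) atTop (𝓝 (d x y)) := by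
  rw [tendsto_iff_norm_sub_tendsto_zero]
  refine squeeze_zero (fun _ => norm_nonneg _) (fun n => ?_) (by simpa using hux.add hvy)
  exact (Real.norm_eq_abs _).trans_le (hd.abs_sub_le (hu n) (hv n) hx hy)

theorem dist_eq_of_chain (hd : IsPseudometricOn S d) {c : ℕ → α} {N : ℕ} {δ : ℝ}
    (hc : ∀ k ≤ N, c k ∈ S) (hstep : ∀ k < N, d (c k) (c (k + 1)) ≤ δ)
    (htotal : N * δ ≤ d (c 0) (c N)) {k l : ℕ} (hkl : k ≤ l) (hlN : l ≤ N) :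
    d (c k) (c l) = (l - k) * δ := by
  have hle : ∀ k l, k ≤ l → l ≤ N → d (c k) (c l) ≤ (l - k) * δ := by
    intro k l hkl hlN
    induction l, hkl using Nat.le_induction with
    | base => simp [hd.dist_self _ (hc k hlN)]
    | succ l hkl ih =>
      calc d (c k) (c (l + 1)) ≤ d (c k) (c l) + d (c l) (c (l + 1)) :=
            hd.dist_triangle _ (hc k (by omega)) _ (hc l (by omega)) _ (hc (l + 1) hlN)
        _ ≤ (l - k) * δ + δ := add_le_add (ih (by omega)) (hstep l (by omega))
        _ = _ := by push_cast; ring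
  have h0k := hle 0 k k.zero_le (hkl.trans hlN)
  have hlN' := hle l N hlN le_rfl
  have t0k := hd.dist_triangle _ (hc 0 (Nat.zero_le N)) _ (hc k (hkl.trans hlN)) _ (hc N le_rfl)
  have tkl := hd.dist_triangle _ (hc k (hkl.trans hlN)) _ (hc l hlN) _ (hc N le_rfl)
  simp only [Nat.cast_zero, sub_zero] at h0k
  exact le_antisymm (hle k l hkl hlN) (by linarith)

end IsPseudometricOn

section Chains

variable {T : Type*} {𝒜 : Set (Set T)} {d : Set T → Set T → ℝ}

def HasMidpoints (𝒜 : Set (Set T)) (d : Set T → Set T → ℝ) : Prop :=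
  ∀ A ∈ 𝒜, ∀ A' ∈ 𝒜, A ⊆ A' → ∃ A'' ∈ 𝒜, A ⊆ A'' ∧ A'' ⊆ A' ∧
    d A A'' = d A A' / 2 ∧ d A'' A' = d A A' / 2

def IsOuterContinuous (𝒜 : Set (Set T)) (d : Set T → Set T → ℝ) : Prop :=
  ∀ As : ℕ → Set T, (∀ n, As n ∈ 𝒜) → (∀ n, As (n + 1) ⊆ As n) → (⋂ n, As n) ∈ 𝒜 →
    Tendsto (fun n => d (As n) (⋂ n, As n)) atTop (𝓝 0)

noncomputable def setMidpoint (𝒜 : Set (Set T)) (d : Set T → Set T → ℝ) (A B : Set T) : Set T :=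
  Classical.epsilon fun C => C ∈ 𝒜 ∧ A ⊆ C ∧ C ⊆ B ∧ d A C = d A B / 2 ∧ d C B = d A B / 2

theorem setMidpoint_spec (hmid : HasMidpoints 𝒜 d) {A B : Set T} (hA : A ∈ 𝒜) (hB : B ∈ 𝒜)
    (hAB : A ⊆ B) :
    setMidpoint 𝒜 d A B ∈ 𝒜 ∧ A ⊆ setMidpoint 𝒜 d A B ∧ setMidpoint 𝒜 d A B ⊆ B ∧
      d A (setMidpoint 𝒜 d A B) = d A B / 2 ∧ d (setMidpoint 𝒜 d A B) B = d A B / 2 :=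
  Classical.epsilon_spec (hmid A hA B hB hAB)

structure IsUniformChain (𝒜 : Set (Set T)) (d : Set T → Set T → ℝ) (c : ℕ → Set T) (N : ℕ)
    (δ : ℝ) : Prop where
  mem : ∀ k ≤ N, c k ∈ 𝒜
  subset_succ : ∀ k < N, c k ⊆ c (k + 1)
  dist_succ : ∀ k < N, d (c k) (c (k + 1)) = δ

namespace IsUniformChain

variable {c : ℕ → Set T} {N : ℕ} {δ : ℝ}

theorem subset (hc : IsUniformChain 𝒜 d c N δ) {k l : ℕ} (hkl : k ≤ l) (hlN : l ≤ N) :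
    c k ⊆ c l := by
  induction l, hkl using Nat.le_induction with
  | base => exact subset_rfl
  | succ l hkl ih => exact (ih (by omega)).trans (hc.subset_succ l hlN)

theorem dist_eq (hd : IsPseudometricOn 𝒜 d) (hc : IsUniformChain 𝒜 d c N δ)
    (htotal : d (c 0) (c N) = N * δ) {k l : ℕ} (hkl : k ≤ l) (hlN : l ≤ N) :
    d (c k) (c l) = (l - k) * δ :=
  hd.dist_eq_of_chain hc.mem (fun k hk => (hc.dist_succ k hk).le) htotal.ge hkl hlN

end IsUniformChain

noncomputable def refineChain (𝒜 : Set (Set T)) (d : Set T → Set T → ℝ) (c : ℕ → Set T)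
    (k : ℕ) : Set T :=
  if k % 2 = 0 then c (k / 2) else setMidpoint 𝒜 d (c (k / 2)) (c (k / 2 + 1))

@[simp]
theorem refineChain_two_mul (c : ℕ → Set T) (k : ℕ) : refineChain 𝒜 d c (2 * k) = c k := by
  simp [refineChain]

theorem refineChain_two_mul_add_one (c : ℕ → Set T) (k : ℕ) :
    refineChain 𝒜 d c (2 * k + 1) = setMidpoint 𝒜 d (c k) (c (k + 1)) := by
  have hmod : (2 * k + 1) % 2 = 1 := by omega
  have hdiv : (2 * k + 1) / 2 = k := by omega
  simp [refineChain, hmod, hdiv]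

theorem IsUniformChain.refine {c : ℕ → Set T} {N : ℕ} {δ : ℝ} (hmid : HasMidpoints 𝒜 d)
    (hc : IsUniformChain 𝒜 d c N δ) :
    IsUniformChain 𝒜 d (refineChain 𝒜 d c) (2 * N) (δ / 2) := by
  have hspec (j : ℕ) (hj : j < N) :=
    setMidpoint_spec hmid (hc.mem j hj.le) (hc.mem (j + 1) hj) (hc.subset_succ j hj)
  have hodd_succ (j : ℕ) : refineChain 𝒜 d c (2 * j + 1 + 1) = c (j + 1) := by
    rw [show 2 * j + 1 + 1 = 2 * (j + 1) by ring, refineChain_two_mul]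
  refine ⟨fun k hk => ?_, fun k hk => ?_, fun k hk => ?_⟩ <;>
    obtain ⟨j, rfl | rfl⟩ := Nat.even_or_odd' k
  · simpa using hc.mem j (by omega)
  · simpa [refineChain_two_mul_add_one] using (hspec j (by omega)).1
  · simpa [refineChain_two_mul_add_one] using (hspec j (by omega)).2.1
  · simpa [refineChain_two_mul_add_one, hodd_succ] using (hspec j (by omega)).2.2.1
  · simp [refineChain_two_mul_add_one, (hspec j (by omega)).2.2.2.1, hc.dist_succ j (by omega)]
  · simp [refineChain_two_mul_add_one, hodd_succ, (hspec j (by omega)).2.2.2.2,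
      hc.dist_succ j (by omega)]

end Chains

section Geodesic

variable {T : Type*} {𝒜 : Set (Set T)} {d : Set T → Set T → ℝ} {A₀ A₁ : Set T}

noncomputable def dyadicChain (𝒜 : Set (Set T)) (d : Set T → Set T → ℝ) (A₀ A₁ : Set T)
    (n : ℕ) : ℕ → Set T :=
  (refineChain 𝒜 d)^[n] fun k => if k = 0 then A₀ else A₁

theorem dyadicChain_succ (n : ℕ) :
    dyadicChain 𝒜 d A₀ A₁ (n + 1) = refineChain 𝒜 d (dyadicChain 𝒜 d A₀ A₁ n) :=
  Function.iterate_succ_apply' _ _ _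

structure IsDyadicNet (𝒜 : Set (Set T)) (d : Set T → Set T → ℝ) (A₀ A₁ : Set T)
    (c : ℕ → ℕ → Set T) : Prop where
  isUniformChain : ∀ n, IsUniformChain 𝒜 d (c n) (2 ^ n) (d A₀ A₁ / 2 ^ n)
  apply_zero : ∀ n, c n 0 = A₀
  apply_two_pow : ∀ n, c n (2 ^ n) = A₁
  succ_two_mul : ∀ n k, c (n + 1) (2 * k) = c n k

theorem isDyadicNet_dyadicChain (hmid : HasMidpoints 𝒜 d) (h₀ : A₀ ∈ 𝒜) (h₁ : A₁ ∈ 𝒜)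
    (hsub : A₀ ⊆ A₁) : IsDyadicNet 𝒜 d A₀ A₁ (dyadicChain 𝒜 d A₀ A₁) := by
  refine ⟨fun n => ?_, fun n => ?_, fun n => ?_, fun n k => ?_⟩
  · induction n with
    | zero =>
      refine ⟨fun k hk => ?_, fun k hk => ?_, fun k hk => ?_⟩ <;>
        obtain rfl | rfl : k = 0 ∨ k = 1 := by omega
      all_goals simp_all [dyadicChain]
    | succ n ih =>
      rw [dyadicChain_succ]
      convert ih.refine hmid using 1 <;> ring
  · induction n with
    | zero => simp [dyadicChain]
    | succ n ih => simp [dyadicChain_succ, refineChain, ih]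
  · induction n with
    | zero => simp [dyadicChain]
    | succ n ih => rw [pow_succ', dyadicChain_succ, refineChain_two_mul, ih]
  · rw [dyadicChain_succ, refineChain_two_mul]

def dyadicLimit (c : ℕ → ℕ → Set T) (x : ℝ) : Set T :=
  ⋂ n, c n ⌈x * 2 ^ n⌉₊

theorem ceil_mul_two_pow_le {x : ℝ} (hx : x ≤ 1) (n : ℕ) : ⌈x * 2 ^ n⌉₊ ≤ 2 ^ n := by
  rw [Nat.ceil_le]
  push_cast
  exact mul_le_of_le_one_left (by positivity) hx

theorem ceil_mul_two_pow_succ_le (x : ℝ) (n : ℕ) : ⌈x * 2 ^ (n + 1)⌉₊ ≤ 2 * ⌈x * 2 ^ n⌉₊ := by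
  rw [Nat.ceil_le]
  push_cast
  calc x * 2 ^ (n + 1) = 2 * (x * 2 ^ n) := by ring
    _ ≤ 2 * ⌈x * 2 ^ n⌉₊ := by gcongr; exact Nat.le_ceil _

theorem tendsto_ceil_mul_two_pow_div {x : ℝ} (hx : 0 ≤ x) :
    Tendsto (fun n : ℕ => (⌈x * 2 ^ n⌉₊ : ℝ) / 2 ^ n) atTop (𝓝 x) :=
  (tendsto_nat_ceil_mul_div_atTop hx).comp (tendsto_pow_atTop_atTop_of_one_lt one_lt_two)

namespace IsDyadicNet

variable {c : ℕ → ℕ → Set T} {x y : ℝ}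

theorem antitone_apply_ceil (hc : IsDyadicNet 𝒜 d A₀ A₁ c) (hx : x ≤ 1) :
    Antitone fun n => c n ⌈x * 2 ^ n⌉₊ := by
  refine antitone_nat_of_succ_le fun n => ?_
  have h2k : 2 * ⌈x * 2 ^ n⌉₊ ≤ 2 ^ (n + 1) := by
    rw [pow_succ']
    exact Nat.mul_le_mul_left 2 (ceil_mul_two_pow_le hx n)
  have h := (hc.isUniformChain (n + 1)).subset (ceil_mul_two_pow_succ_le x n) h2k
  rwa [hc.succ_two_mul] at h

theorem dyadicLimit_mem (hc : IsDyadicNet 𝒜 d A₀ A₁ c)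
    (hcap : ∀ As : ℕ → Set T, (∀ n, As n ∈ 𝒜) → (⋂ n, As n) ∈ 𝒜) (hx : x ≤ 1) :
    dyadicLimit c x ∈ 𝒜 :=
  hcap _ fun n => (hc.isUniformChain n).mem _ (ceil_mul_two_pow_le hx n)

theorem dyadicLimit_zero (hc : IsDyadicNet 𝒜 d A₀ A₁ c) : dyadicLimit c 0 = A₀ := by
  simp only [dyadicLimit, zero_mul, Nat.ceil_zero, hc.apply_zero, Set.iInter_const]

theorem dyadicLimit_one (hc : IsDyadicNet 𝒜 d A₀ A₁ c) : dyadicLimit c 1 = A₁ := by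
  have hceil (n : ℕ) : ⌈(1 : ℝ) * 2 ^ n⌉₊ = 2 ^ n := by
    rw [one_mul]
    exact_mod_cast Nat.ceil_natCast (2 ^ n)
  simp only [dyadicLimit, hceil, hc.apply_two_pow, Set.iInter_const]

theorem dyadicLimit_mono (hc : IsDyadicNet 𝒜 d A₀ A₁ c) (hy : y ≤ 1) (hxy : x ≤ y) :
    dyadicLimit c x ⊆ dyadicLimit c y :=
  Set.iInter_mono fun n =>
    (hc.isUniformChain n).subset (Nat.ceil_mono (by gcongr)) (ceil_mul_two_pow_le hy n)

theorem tendsto_dist_dyadicLimit (hc : IsDyadicNet 𝒜 d A₀ A₁ c)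
    (hcap : ∀ As : ℕ → Set T, (∀ n, As n ∈ 𝒜) → (⋂ n, As n) ∈ 𝒜)
    (houter : IsOuterContinuous 𝒜 d) (hx : x ≤ 1) :
    Tendsto (fun n => d (c n ⌈x * 2 ^ n⌉₊) (dyadicLimit c x)) atTop (𝓝 0) :=
  houter _ (fun n => (hc.isUniformChain n).mem _ (ceil_mul_two_pow_le hx n))
    (fun n => hc.antitone_apply_ceil hx n.le_succ) (hc.dyadicLimit_mem hcap hx)

theorem dist_dyadicLimit_of_le (hc : IsDyadicNet 𝒜 d A₀ A₁ c) (hd : IsPseudometricOn 𝒜 d)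
    (hcap : ∀ As : ℕ → Set T, (∀ n, As n ∈ 𝒜) → (⋂ n, As n) ∈ 𝒜)
    (houter : IsOuterContinuous 𝒜 d) (hx : x ∈ Set.Icc (0 : ℝ) 1) (hy : y ∈ Set.Icc (0 : ℝ) 1)
    (hxy : x ≤ y) : d (dyadicLimit c x) (dyadicLimit c y) = d A₀ A₁ * (y - x) := by
  have hgrid (n : ℕ) : d (c n ⌈x * 2 ^ n⌉₊) (c n ⌈y * 2 ^ n⌉₊) =
      ((⌈y * 2 ^ n⌉₊ : ℝ) / 2 ^ n - ⌈x * 2 ^ n⌉₊ / 2 ^ n) * d A₀ A₁ := by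
    have htotal : d (c n 0) (c n (2 ^ n)) = ((2 ^ n : ℕ) : ℝ) * (d A₀ A₁ / 2 ^ n) := by
      rw [hc.apply_zero, hc.apply_two_pow]
      push_cast
      field_simp
    rw [(hc.isUniformChain n).dist_eq hd htotal (Nat.ceil_mono (by gcongr))
      (ceil_mul_two_pow_le hy.2 n)]
    ring
  have hlim_grid : Tendsto (fun n => d (c n ⌈x * 2 ^ n⌉₊) (c n ⌈y * 2 ^ n⌉₊)) atTop
      (𝓝 ((y - x) * d A₀ A₁)) := by
    simp_rw [hgrid]
    exact ((tendsto_ceil_mul_two_pow_div hy.1).sub (tendsto_ceil_mul_two_pow_div hx.1)).mul_const _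
  have hlim := hd.tendsto_dist (fun n => (hc.isUniformChain n).mem _ (ceil_mul_two_pow_le hx.2 n))
    (fun n => (hc.isUniformChain n).mem _ (ceil_mul_two_pow_le hy.2 n))
    (hc.dyadicLimit_mem hcap hx.2) (hc.dyadicLimit_mem hcap hy.2)
    (hc.tendsto_dist_dyadicLimit hcap houter hx.2) (hc.tendsto_dist_dyadicLimit hcap houter hy.2)
  rw [tendsto_nhds_unique hlim hlim_grid, mul_comm]

theorem dist_dyadicLimit (hc : IsDyadicNet 𝒜 d A₀ A₁ c) (hd : IsPseudometricOn 𝒜 d)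
    (hcap : ∀ As : ℕ → Set T, (∀ n, As n ∈ 𝒜) → (⋂ n, As n) ∈ 𝒜)
    (houter : IsOuterContinuous 𝒜 d) (hx : x ∈ Set.Icc (0 : ℝ) 1) (hy : y ∈ Set.Icc (0 : ℝ) 1) :
    d (dyadicLimit c x) (dyadicLimit c y) = d A₀ A₁ * |x - y| := by
  rcases le_total x y with hxy | hyx
  · rw [hc.dist_dyadicLimit_of_le hd hcap houter hx hy hxy, abs_sub_comm,
      abs_of_nonneg (sub_nonneg.2 hxy)]
  · rw [hd.dist_comm _ (hc.dyadicLimit_mem hcap hx.2) _ (hc.dyadicLimit_mem hcap hy.2),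
      hc.dist_dyadicLimit_of_le hd hcap houter hy hx hyx, abs_of_nonneg (sub_nonneg.2 hyx)]

end IsDyadicNet

end Geodesic

theorem stmt_4_general {T : Type*} (𝒜 : Set (Set T))
    (hcap : ∀ As : ℕ → Set T, (∀ n, As n ∈ 𝒜) → (⋂ n, As n) ∈ 𝒜)
    (d : Set T → Set T → ℝ)
    (hsymm : ∀ A ∈ 𝒜, ∀ B ∈ 𝒜, d A B = d B A)
    (htri : ∀ A ∈ 𝒜, ∀ B ∈ 𝒜, ∀ C ∈ 𝒜, d A C ≤ d A B + d B C)
    (hrefl : ∀ A ∈ 𝒜, d A A = 0)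
    (houter : ∀ As : ℕ → Set T, (∀ n, As n ∈ 𝒜) → (∀ n, As (n + 1) ⊆ As n) →
      (⋂ n, As n) ∈ 𝒜 →
      Filter.Tendsto (fun n => d (As n) (⋂ n, As n)) Filter.atTop (nhds 0))
    (hmid : ∀ A ∈ 𝒜, ∀ A' ∈ 𝒜, A ⊆ A' → ∃ A'' ∈ 𝒜, A ⊆ A'' ∧ A'' ⊆ A' ∧
      d A A'' = d A A' / 2 ∧ d A'' A' = d A A' / 2)
    (A₀ A₁ : Set T) (h₀ : A₀ ∈ 𝒜) (h₁ : A₁ ∈ 𝒜)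
    (hsub : A₀ ⊆ A₁) :
    ∃ γ : ℝ → Set T,
      (∀ x ∈ Set.Icc (0 : ℝ) 1, γ x ∈ 𝒜) ∧
      γ 0 = A₀ ∧ γ 1 = A₁ ∧
      (∀ x ∈ Set.Icc (0 : ℝ) 1, ∀ y ∈ Set.Icc (0 : ℝ) 1, x ≤ y → γ x ⊆ γ y) ∧
      (∀ x ∈ Set.Icc (0 : ℝ) 1, ∀ y ∈ Set.Icc (0 : ℝ) 1,
        d (γ x) (γ y) = d A₀ A₁ * |x - y|) := by
  have hd : IsPseudometricOn 𝒜 d := ⟨hrefl, hsymm, htri⟩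
  have hc := isDyadicNet_dyadicChain hmid h₀ h₁ hsub
  exact ⟨dyadicLimit (dyadicChain 𝒜 d A₀ A₁), fun x hx => hc.dyadicLimit_mem hcap hx.2,
    hc.dyadicLimit_zero, hc.dyadicLimit_one, fun x _ y hy hxy => hc.dyadicLimit_mono hy.2 hxy,
    fun x hx y hy => hc.dist_dyadicLimit hd hcap houter hx hy⟩

/-- **Existence of increasing constant-speed geodesics.**
Let `𝒜` be a collection of subsets of `T` closed under countable intersections and `d` a
pseudometric on `𝒜` that is outer continuous and has the midpoint property. Then for all
`A₀ ⊆ A₁` in `𝒜` with `A₀ ≠ A₁` and `d A₀ A₁ > 0`, there exists an increasing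
constant-speed geodesic `γ : [0,1] → 𝒜` from `A₀` to `A₁`. -/
theorem stmt_4 {T : Type*} (𝒜 : Set (Set T))
    (hcap : ∀ As : ℕ → Set T, (∀ n, As n ∈ 𝒜) → (⋂ n, As n) ∈ 𝒜)
    (d : Set T → Set T → ℝ)
    (hnn : ∀ A ∈ 𝒜, ∀ B ∈ 𝒜, 0 ≤ d A B)
    (hsymm : ∀ A ∈ 𝒜, ∀ B ∈ 𝒜, d A B = d B A)
    (htri : ∀ A ∈ 𝒜, ∀ B ∈ 𝒜, ∀ C ∈ 𝒜, d A C ≤ d A B + d B C)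
    (hrefl : ∀ A ∈ 𝒜, d A A = 0)
    (houter : ∀ As : ℕ → Set T, (∀ n, As n ∈ 𝒜) → (∀ n, As (n + 1) ⊆ As n) →
      (⋂ n, As n) ∈ 𝒜 →
      Filter.Tendsto (fun n => d (As n) (⋂ n, As n)) Filter.atTop (nhds 0))
    (hmid : ∀ A ∈ 𝒜, ∀ A' ∈ 𝒜, A ⊆ A' → ∃ A'' ∈ 𝒜, A ⊆ A'' ∧ A'' ⊆ A' ∧
      d A A'' = d A A' / 2 ∧ d A'' A' = d A A' / 2)
    (A₀ A₁ : Set T) (h₀ : A₀ ∈ 𝒜) (h₁ : A₁ ∈ 𝒜)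
    (hsub : A₀ ⊆ A₁) (hne : A₀ ≠ A₁) (hd : 0 < d A₀ A₁) :
    ∃ γ : ℝ → Set T,
      (∀ x ∈ Set.Icc (0 : ℝ) 1, γ x ∈ 𝒜) ∧
      γ 0 = A₀ ∧ γ 1 = A₁ ∧
      (∀ x ∈ Set.Icc (0 : ℝ) 1, ∀ y ∈ Set.Icc (0 : ℝ) 1, x ≤ y → γ x ⊆ γ y) ∧
      (∀ x ∈ Set.Icc (0 : ℝ) 1, ∀ y ∈ Set.Icc (0 : ℝ) 1,
        d (γ x) (γ y) = d A₀ A₁ * |x - y|) :=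
  stmt_4_general 𝒜 hcap d hsymm htri hrefl houter hmid A₀ A₁ h₀ h₁ hsub
end

section
/- Let (T, ≼) be a partially ordered set such that (a) every nonempty countable subset of T admits a greatest lower bound in T, and (b) there is a countable subset D ⊆ T such that every t ∈ T is the greatest lower bound of some nonincreasing sequence with values in D. For t ∈ T put A(t) := {s ∈ T : s ≼ t} and 𝒜 := {A(t) : t ∈ T} ∪ {∅}. Then: (i) the map t ↦ A(t) is injective, and for every sequence (t_n) in T one has ⋂_n A(t_n) = A(g), where g is the greatest lower bound of {t_n : n ∈ ℕ}; (ii) 𝒜 satisfies the SHAPE condition; (iii) there exists a nondecreasing sequence (𝒜_n) of finite subcollections of 𝒜 \ {∅}, each closed under binary intersections, such that for every t ∈ T, A(t) = ⋂_n g_n(A(t)), where g_n(A) := ⋂ {A' ∈ 𝒜_n ∪ {T} : A ⊆ A'}. -/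
lemma iInter_Iic_eq_Iic {T : Type*} [PartialOrder T] (u : ℕ → T) (g : T)
    (hg : IsGLB (Set.range u) g) : (⋂ n, Set.Iic (u n)) = Set.Iic g := by
  ext x
  simp only [Set.mem_iInter, Set.mem_Iic]
  constructor
  · intro h
    exact hg.2 (fun y ⟨n, hn⟩ => hn ▸ h n)
  · intro h n
    exact le_trans h (hg.1 ⟨n, rfl⟩)

lemma biInter_Iic_eq_Iic {T : Type*} [PartialOrder T] (d : ℕ → T) (F : Finset ℕ) (g : T)
    (hg : IsGLB (d '' F) g) : (⋂ i ∈ F, Set.Iic (d i)) = Set.Iic g := by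
  ext x
  simp only [Set.mem_iInter, Set.mem_Iic]
  constructor
  · intro h
    exact hg.2 (fun y ⟨i, hi, hiy⟩ => hiy ▸ h i hi)
  · intro h i hi
    exact le_trans h (hg.1 ⟨i, hi, rfl⟩)

/-- **Correspondence `(T, ≼) ↦ (T, 𝒜)`.**
Let `(T, ≼)` be a poset such that (a) every nonempty countable subset admits a greatest
lower bound, and (b) there is a countable `D ⊆ T` such that every `t` is the GLB of a
nonincreasing sequence valued in `D`. With `A t := Set.Iic t` and
`𝒜 := range A ∪ {∅}`, then: (i) `A` is injective and `⋂ₙ A (tₙ) = A g` whenever `g` is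
the GLB of `{tₙ}`; (ii) `𝒜` satisfies SHAPE; (iii) there is a nondecreasing sequence of
finite subcollections of `𝒜 \ {∅}`, each closed under binary intersections, separating
`𝒜` from above. -/
theorem stmt_5 {T : Type*} [PartialOrder T]
    (hglb : ∀ S : Set T, S.Nonempty → S.Countable → ∃ g, IsGLB S g)
    (hsep : ∃ D : Set T, D.Countable ∧ ∀ t : T, ∃ u : ℕ → T,
      (∀ n, u n ∈ D) ∧ (∀ n, u (n + 1) ≤ u n) ∧ IsGLB (Set.range u) t) :
    (Function.Injective (fun t : T => Set.Iic t)) ∧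
    (∀ (u : ℕ → T) (g : T), IsGLB (Set.range u) g →
      (⋂ n, Set.Iic (u n)) = Set.Iic g) ∧
    (∀ (n : ℕ) (B : Set T) (Bs : Fin (n + 1) → Set T),
      B ∈ Set.range (fun t : T => Set.Iic t) ∪ {(∅ : Set T)} →
      (∀ i, Bs i ∈ Set.range (fun t : T => Set.Iic t) ∪ {(∅ : Set T)}) →
      B ⊆ ⋃ i, Bs i → ∃ j, B ⊆ Bs j) ∧
    (∃ 𝒜n : ℕ → Set (Set T),
      (∀ n, (𝒜n n).Finite) ∧
      (∀ n, 𝒜n n ⊆ (Set.range (fun t : T => Set.Iic t) ∪ {(∅ : Set T)}) \ {∅}) ∧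
      (∀ n, 𝒜n n ⊆ 𝒜n (n + 1)) ∧
      (∀ n, ∀ B ∈ 𝒜n n, ∀ B' ∈ 𝒜n n, B ∩ B' ∈ 𝒜n n) ∧
      (∀ t : T, Set.Iic t =
        ⋂ n, ⋂₀ {A' : Set T | (A' ∈ 𝒜n n ∨ A' = Set.univ) ∧ Set.Iic t ⊆ A'})) := by
  refine ⟨?_, ?_, ?_, ?_⟩
  · intro a b h
    simp only at h
    have h1 : a ∈ Set.Iic b := h ▸ Set.mem_Iic.mpr (le_refl a)
    have h2 : b ∈ Set.Iic a := h.symm ▸ Set.mem_Iic.mpr (le_refl b)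
    exact le_antisymm h1 h2
  · exact iInter_Iic_eq_Iic
  · rintro n B Bs hB hBs hsub
    rcases hB with ⟨t, rfl⟩ | hB
    · simp only at *
      have ht : t ∈ ⋃ i, Bs i := hsub (le_refl t)
      obtain ⟨j, hj⟩ := Set.mem_iUnion.mp ht
      refine ⟨j, ?_⟩
      rcases hBs j with ⟨s, hs⟩ | hBsj
      · simp only at hs
        intro x hx
        rw [← hs] at hj ⊢
        exact le_trans hx hj
      · rw [Set.mem_singleton_iff] at hBsj
        rw [hBsj] at hj
        exact absurd hj (Set.notMem_empty t)
    · rw [Set.mem_singleton_iff] at hB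
      subst hB
      exact ⟨0, Set.empty_subset _⟩
  · obtain ⟨D, hDc, hD⟩ := hsep
    rcases isEmpty_or_nonempty T with hT | hT
    · refine ⟨fun _ => ∅, fun _ => Set.finite_empty, fun _ => Set.empty_subset _,
        fun _ => le_refl _, fun n B hB => absurd hB (Set.notMem_empty B),
        fun t => (IsEmpty.false t).elim⟩
    · have hDne : D.Nonempty := by
        obtain ⟨u, hu, _, _⟩ := hD (Classical.arbitrary T)
        exact ⟨u 0, hu 0⟩
      obtain ⟨d, hd⟩ := Set.Countable.exists_eq_range hDc hDne
      set 𝒜n : ℕ → Set (Set T) :=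
        fun n => (fun F : Finset ℕ => ⋂ i ∈ F, Set.Iic (d i)) ''
          {F | F.Nonempty ∧ F ⊆ Finset.range (n + 1)} with h𝒜n
      have key : ∀ F : Finset ℕ, F.Nonempty → ∃ g, (⋂ i ∈ F, Set.Iic (d i)) = Set.Iic g := by
        intro F hF
        obtain ⟨i, hi⟩ := hF
        obtain ⟨g, hg⟩ := hglb (d '' F) ⟨d i, ⟨i, hi, rfl⟩⟩
          ((F.finite_toSet.image d).countable)
        exact ⟨g, biInter_Iic_eq_Iic d F g hg⟩
      refine ⟨𝒜n, ?_, ?_, ?_, ?_, ?_⟩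
      · intro n
        refine Set.Finite.image _ (Set.Finite.subset (Finset.range (n + 1)).powerset.finite_toSet ?_)
        intro F hF
        simp only [Finset.coe_powerset, Set.mem_preimage, Set.mem_powerset_iff,
          Finset.coe_subset]
        exact hF.2
      · rintro n B ⟨F, ⟨hFne, _⟩, rfl⟩
        obtain ⟨g, hg⟩ := key F hFne
        refine ⟨Or.inl ⟨g, hg.symm⟩, ?_⟩
        simp only [Set.mem_singleton_iff, hg]
        exact Set.Nonempty.ne_empty ⟨g, le_refl g⟩
      · rintro n B ⟨F, ⟨hFne, hFsub⟩, rfl⟩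
        exact ⟨F, ⟨hFne, hFsub.trans (by intro x hx; simp at hx ⊢; omega)⟩, rfl⟩
      · rintro n B ⟨F, ⟨hFne, hFsub⟩, rfl⟩ B' ⟨F', ⟨hF'ne, hF'sub⟩, rfl⟩
        refine ⟨F ∪ F', ⟨hFne.mono Finset.subset_union_left, Finset.union_subset hFsub hF'sub⟩, ?_⟩
        ext x
        simp only [Set.mem_iInter, Set.mem_inter_iff, Finset.mem_union, or_imp, forall_and]
      · intro t
        apply Set.Subset.antisymm
        · intro x hx
          simp only [Set.mem_iInter, Set.mem_sInter, Set.mem_setOf_eq]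
          rintro n A' ⟨_, hA'⟩
          exact hA' hx
        · intro x hx
          simp only [Set.mem_iInter, Set.mem_sInter, Set.mem_setOf_eq] at hx
          obtain ⟨u, huD, _, hu⟩ := hD t
          rw [Set.mem_Iic]
          refine hu.2 (fun y ⟨k, hk⟩ => ?_)
          subst hk
          have : u k ∈ Set.range d := hd ▸ huD k
          obtain ⟨m, hm⟩ := this
          have hmem : Set.Iic (u k) ∈ 𝒜n m := by
            refine ⟨{m}, ⟨Finset.singleton_nonempty m, by simp⟩, ?_⟩
            simp [hm]
          have : x ∈ Set.Iic (u k) :=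
            hx m _ ⟨Or.inl hmem, fun z hz => le_trans hz (hu.1 ⟨k, rfl⟩)⟩
          exact this
end

section
/- Let T be a set, 𝒜 a collection of subsets of T containing ∅ and closed under countable intersections, and d a pseudometric on 𝒜 that is outer continuous and has the midpoint property. Let t ∈ T be such that the set A(t) := ⋂ {A ∈ 𝒜 : t ∈ A} belongs to 𝒜 and contains t. Then for every A ∈ 𝒜, qd(t, A) ≤ d(A(t), A). -/
open scoped ENNReal

/-- The victiny of `A` of size `ρ` : the union of the symmetric differences `A △ A'` over
`A' ∈ 𝒜` with `d A A' < ρ`; it is empty for `ρ ≤ 0`. -/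
def victiny {T : Type*} (𝒜 : Set (Set T)) (d : Set T → Set T → ℝ)
    (A : Set T) (ρ : ℝ) : Set T :=
  {t | 0 < ρ ∧ ∃ A' ∈ 𝒜, d A A' < ρ ∧ t ∈ symmDiff A A'}

/-- The divergence `qd(t, A) := inf {ρ > 0 : t ∈ V(A, ρ)} ∈ [0, ∞]`,
with `inf ∅ = ∞`. -/
noncomputable def qd {T : Type*} (𝒜 : Set (Set T)) (d : Set T → Set T → ℝ)
    (t : T) (A : Set T) : ℝ≥0∞ :=
  sInf (ENNReal.ofReal '' {ρ : ℝ | 0 < ρ ∧ t ∈ victiny 𝒜 d A ρ})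

/-!
Let `A(t)` be the smallest member of `𝒜` containing `t`. If `t ∉ A`, then `A(t)` itself witnesses
`t ∈ V(A, ρ)` for every `ρ > d(A(t), A)`. If `t ∈ A`, bisect between `∅` and `A(t)` with the
midpoint property: a midpoint either misses `t`, so it replaces the lower end and the distance to
`A(t)` halves, or it contains `t` and is then `A(t)` itself, which forces that distance to be `0`.
This yields `B ∈ 𝒜` with `t ∉ B` arbitrarily close to `A(t)`, hence `t ∈ A △ B` with
`d(A, B) ≤ d(A, A(t)) + d(A(t), B)` as close to `d(A(t), A)` as we like.
-/

section

variable {T : Type*} {𝒜 : Set (Set T)} {d : Set T → Set T → ℝ}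

theorem qd_le_ofReal {t : T} {A A' : Set T} {ρ : ℝ} (hA' : A' ∈ 𝒜) (hlt : d A A' < ρ)
    (ht : t ∈ symmDiff A A') (hρ : 0 < ρ) : qd 𝒜 d t A ≤ ENNReal.ofReal ρ :=
  sInf_le ⟨ρ, ⟨hρ, hρ, A', hA', hlt, ht⟩, rfl⟩

theorem qd_le_ofReal_of_forall_pos {t : T} {A : Set T} {r : ℝ} (hr : 0 ≤ r)
    (h : ∀ ε > 0, ∃ A' ∈ 𝒜, d A A' < r + ε ∧ t ∈ symmDiff A A') :
    qd 𝒜 d t A ≤ ENNReal.ofReal r := by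
  refine ENNReal.le_of_forall_pos_le_add fun ε hε _ => ?_
  obtain ⟨A', hA', hlt, ht⟩ := h ε hε
  calc qd 𝒜 d t A ≤ ENNReal.ofReal (r + ε) := qd_le_ofReal hA' hlt ht (by positivity)
    _ = ENNReal.ofReal r + ε := by
      rw [ENNReal.ofReal_add hr ε.coe_nonneg, ENNReal.ofReal_coe_nnreal]

variable (hmid : ∀ A ∈ 𝒜, ∀ A' ∈ 𝒜, A ⊆ A' → ∃ A'' ∈ 𝒜, A ⊆ A'' ∧ A'' ⊆ A' ∧
      d A A'' = d A A' / 2 ∧ d A'' A' = d A A' / 2)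
include hmid

theorem exists_notMem_subset_two_pow_mul_le {t : T} {At B₀ : Set T} (hAt : At ∈ 𝒜)
    (hmin : ∀ M ∈ 𝒜, t ∈ M → At ⊆ M) (hB₀ : B₀ ∈ 𝒜) (htB₀ : t ∉ B₀) (hB₀At : B₀ ⊆ At)
    (n : ℕ) : ∃ B ∈ 𝒜, t ∉ B ∧ B ⊆ At ∧ 2 ^ n * d B At ≤ d B₀ At := by
  induction n with
  | zero => exact ⟨B₀, hB₀, htB₀, hB₀At, by simp⟩
  | succ n ih =>
    obtain ⟨B, hB, htB, hBAt, hle⟩ := ih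
    obtain ⟨M, hM, hBM, hMAt, hdBM, hdMAt⟩ := hmid B hB At hAt hBAt
    by_cases htM : t ∈ M
    · have hMeq : M = At := hMAt.antisymm (hmin M hM htM)
      have hzero : d B At = 0 := by rw [hMeq] at hdBM; linarith
      refine ⟨B, hB, htB, hBAt, ?_⟩
      simpa [hzero] using hle
    · refine ⟨M, hM, htM, hMAt, ?_⟩
      calc 2 ^ (n + 1) * d M At = 2 ^ n * d B At := by rw [hdMAt]; ring
        _ ≤ d B₀ At := hle

theorem exists_notMem_lt {t : T} {At B₀ : Set T} (hAt : At ∈ 𝒜)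
    (hmin : ∀ M ∈ 𝒜, t ∈ M → At ⊆ M) (hB₀ : B₀ ∈ 𝒜) (htB₀ : t ∉ B₀) (hB₀At : B₀ ⊆ At)
    {ε : ℝ} (hε : 0 < ε) : ∃ B ∈ 𝒜, t ∉ B ∧ d B At < ε := by
  obtain ⟨n, hn⟩ := pow_unbounded_of_one_lt (d B₀ At / ε) one_lt_two
  rw [div_lt_iff₀ hε] at hn
  obtain ⟨B, hB, htB, -, hle⟩ :=
    exists_notMem_subset_two_pow_mul_le hmid hAt hmin hB₀ htB₀ hB₀At n
  exact ⟨B, hB, htB, lt_of_mul_lt_mul_left (hle.trans_lt hn) (by positivity)⟩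

end

theorem stmt_9_general {T : Type*} (𝒜 : Set (Set T)) (d : Set T → Set T → ℝ)
    (hempty : (∅ : Set T) ∈ 𝒜)
    (hnn : ∀ A ∈ 𝒜, ∀ B ∈ 𝒜, 0 ≤ d A B)
    (hsymm : ∀ A ∈ 𝒜, ∀ B ∈ 𝒜, d A B = d B A)
    (htri : ∀ A ∈ 𝒜, ∀ B ∈ 𝒜, ∀ C ∈ 𝒜, d A C ≤ d A B + d B C)
    (hmid : ∀ A ∈ 𝒜, ∀ A' ∈ 𝒜, A ⊆ A' → ∃ A'' ∈ 𝒜, A ⊆ A'' ∧ A'' ⊆ A' ∧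
      d A A'' = d A A' / 2 ∧ d A'' A' = d A A' / 2)
    (t : T)
    (hAt : (⋂₀ {B : Set T | B ∈ 𝒜 ∧ t ∈ B}) ∈ 𝒜)
    (htAt : t ∈ ⋂₀ {B : Set T | B ∈ 𝒜 ∧ t ∈ B})
    (A : Set T) (hA : A ∈ 𝒜) :
    qd 𝒜 d t A ≤ ENNReal.ofReal (d (⋂₀ {B : Set T | B ∈ 𝒜 ∧ t ∈ B}) A) := by
  set At := ⋂₀ {B : Set T | B ∈ 𝒜 ∧ t ∈ B}
  have hmin : ∀ M ∈ 𝒜, t ∈ M → At ⊆ M := fun M hM htM => Set.sInter_subset_of_mem ⟨hM, htM⟩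
  refine qd_le_ofReal_of_forall_pos (hnn At hAt A hA) fun ε hε => ?_
  by_cases htA : t ∈ A
  · obtain ⟨B, hB, htB, hlt⟩ :=
      exists_notMem_lt hmid hAt hmin hempty (Set.notMem_empty t) (Set.empty_subset At) hε
    refine ⟨B, hB, ?_, Or.inl ⟨htA, htB⟩⟩
    linarith [htri A hA At hAt B hB, hsymm A hA At hAt, hsymm At hAt B hB]
  · exact ⟨At, hAt, by linarith [hsymm A hA At hAt], Or.inr ⟨htAt, htA⟩⟩

/-- **The divergence is bounded by the distance to `A(t)`:**
if `𝒜` contains `∅`, is closed under countable intersections and `d` is an outer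
continuous pseudometric with the midpoint property, then for `t ∈ T` with
`A(t) := ⋂ {B ∈ 𝒜 : t ∈ B} ∈ 𝒜` and `t ∈ A(t)`, one has `qd(t, A) ≤ d(A(t), A)` for
every `A ∈ 𝒜`. -/
theorem stmt_9 {T : Type*} (𝒜 : Set (Set T)) (d : Set T → Set T → ℝ)
    (hempty : (∅ : Set T) ∈ 𝒜)
    (hcap : ∀ As : ℕ → Set T, (∀ n, As n ∈ 𝒜) → (⋂ n, As n) ∈ 𝒜)
    (hnn : ∀ A ∈ 𝒜, ∀ B ∈ 𝒜, 0 ≤ d A B)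
    (hsymm : ∀ A ∈ 𝒜, ∀ B ∈ 𝒜, d A B = d B A)
    (htri : ∀ A ∈ 𝒜, ∀ B ∈ 𝒜, ∀ C ∈ 𝒜, d A C ≤ d A B + d B C)
    (hrefl : ∀ A ∈ 𝒜, d A A = 0)
    (houter : ∀ As : ℕ → Set T, (∀ n, As n ∈ 𝒜) → (∀ n, As (n + 1) ⊆ As n) →
      (⋂ n, As n) ∈ 𝒜 →
      Filter.Tendsto (fun n => d (As n) (⋂ n, As n)) Filter.atTop (nhds 0))
    (hmid : ∀ A ∈ 𝒜, ∀ A' ∈ 𝒜, A ⊆ A' → ∃ A'' ∈ 𝒜, A ⊆ A'' ∧ A'' ⊆ A' ∧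
      d A A'' = d A A' / 2 ∧ d A'' A' = d A A' / 2)
    (t : T)
    (hAt : (⋂₀ {B : Set T | B ∈ 𝒜 ∧ t ∈ B}) ∈ 𝒜)
    (htAt : t ∈ ⋂₀ {B : Set T | B ∈ 𝒜 ∧ t ∈ B})
    (A : Set T) (hA : A ∈ 𝒜) :
    qd 𝒜 d t A ≤ ENNReal.ofReal (d (⋂₀ {B : Set T | B ∈ 𝒜 ∧ t ∈ B}) A) :=
  stmt_9_general 𝒜 d hempty hnn hsymm htri hmid t hAt htAt A hA
end

section
/- Let T be a set and 𝒜 a collection of subsets of T containing ∅ and closed under binary intersections, and suppose there is a sequence (T_k)_{k∈ℕ} of elements of 𝒜 with T = ⋃_k T_k. Let μ be a measure on the σ-algebra generated by 𝒜 such that μ(A) < ∞ for every A ∈ 𝒜, and let p ∈ [1, ∞) be a real number. Then for every measurable function f : T → ℝ with ∫ |f|^p dμ < ∞ and every ε > 0, there exists a function g in the ℝ-linear span of {1_A : A ∈ 𝒜} such that (∫ |f − g|^p dμ)^{1/p} < ε; i.e. the space of simple functions is dense in L^p(μ). -/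
open MeasureTheory Set
open scoped ENNReal symmDiff

/-!
Since `𝒜` is a π-system, the span `S` of the indicators `1_A`, `A ∈ 𝒜`, is closed under
products, so the sets whose indicator lies in `S` form a ring of sets `𝒞`. For `U ∈ 𝒞` the sets
`t` with `t ∩ U ∈ 𝒞` form an algebra containing `𝒜`, hence every `t ∩ U` with `t` in the algebra
generated by `𝒜` lies in `𝒞`. That algebra is measure-dense for the σ-finite measure `μ`, and
intersecting with the partial unions `U_n` of the `T_k` (which lie in `𝒞`) costs arbitrarily
little measure, so `𝒞` is measure-dense. Approximating simple functions set by set then makes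
`S` dense in `Lᵖ(μ)`.
-/

theorem MeasureTheory.IsSetRing.isSetAlgebra_setOf_inter_mem {α : Type*} {𝒞 : Set (Set α)}
    (h𝒞 : IsSetRing 𝒞) {U : Set α} (hU : U ∈ 𝒞) : IsSetAlgebra {t | t ∩ U ∈ 𝒞} where
  empty_mem := by simpa using h𝒞.empty_mem
  compl_mem t ht := by
    have : tᶜ ∩ U = U \ (t ∩ U) := by rw [inter_comm t, sdiff_self_inter, sdiff_eq, inter_comm]
    rw [mem_ofPred_eq, this]
    exact h𝒞.sdiff_mem hU ht
  union_mem t t' ht ht' := by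
    rw [mem_ofPred_eq, union_inter_distrib_right]
    exact h𝒞.union_mem ht ht'

def indicatorSpan {T : Type*} (𝒜 : Set (Set T)) : Submodule ℝ (T → ℝ) :=
  Submodule.span ℝ ((fun A : Set T => A.indicator (fun _ => (1 : ℝ))) '' 𝒜)

namespace indicatorSpan

variable {T : Type*} {𝒜 : Set (Set T)}

theorem indicator_mem {A : Set T} (hA : A ∈ 𝒜) : A.indicator (fun _ => 1) ∈ indicatorSpan 𝒜 :=
  Submodule.subset_span ⟨A, hA, rfl⟩

theorem mul_mem (h𝒜 : IsPiSystem 𝒜) {g h : T → ℝ} (hg : g ∈ indicatorSpan 𝒜)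
    (hh : h ∈ indicatorSpan 𝒜) : g * h ∈ indicatorSpan 𝒜 := by
  have hgh := Submodule.mul_mem_mul hg hh
  rw [indicatorSpan, Submodule.span_mul_span] at hgh
  refine Submodule.span_le.2 ?_ hgh
  rintro _ ⟨_, ⟨A, hA, rfl⟩, _, ⟨B, hB, rfl⟩, rfl⟩
  change A.indicator 1 * B.indicator 1 ∈ indicatorSpan 𝒜
  rw [← inter_indicator_one]
  rcases (A ∩ B).eq_empty_or_nonempty with hAB | hAB
  · rw [hAB, indicator_empty']
    exact zero_mem _
  · exact indicator_mem (h𝒜 A hA B hB hAB)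

theorem isSetRing_setOf_indicator_mem (h𝒜 : IsPiSystem 𝒜) :
    IsSetRing {t | t.indicator (fun _ => (1 : ℝ)) ∈ indicatorSpan 𝒜} := by
  have inter_mem {s t : Set T} (hs : s.indicator (fun _ => (1 : ℝ)) ∈ indicatorSpan 𝒜)
      (ht : t.indicator (fun _ => (1 : ℝ)) ∈ indicatorSpan 𝒜) :
      (s ∩ t).indicator (fun _ => (1 : ℝ)) ∈ indicatorSpan 𝒜 :=
    inter_indicator_one (M₀ := ℝ) ▸ mul_mem h𝒜 hs ht
  refine ⟨by simpa only [mem_ofPred_eq, indicator_empty'] using zero_mem _, fun s t hs ht => ?_,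
    fun s t hs ht => ?_⟩
  · rw [mem_ofPred_eq, eq_sub_of_add_eq (indicator_union_add_inter (fun _ => (1 : ℝ)) s t)]
    exact Submodule.sub_mem _ (Submodule.add_mem _ hs ht) (inter_mem hs ht)
  · rw [mem_ofPred_eq, ← sdiff_self_inter, indicator_sdiff inter_subset_left]
    exact Submodule.sub_mem _ hs (inter_mem hs ht)

theorem measurable [MeasurableSpace T] (h𝒜 : ∀ A ∈ 𝒜, MeasurableSet A) {g : T → ℝ}
    (hg : g ∈ indicatorSpan 𝒜) : Measurable g := by
  induction hg using Submodule.span_induction with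
  | mem _ hx =>
    obtain ⟨A, hA, rfl⟩ := hx
    exact measurable_const.indicator (h𝒜 A hA)
  | zero => exact measurable_const
  | add _ _ _ _ hx hy => exact hx.add hy
  | smul a _ _ hx => exact hx.const_smul a

theorem inter_indicator_mem_of_mem_generateSetAlgebra (h𝒜 : IsPiSystem 𝒜) {t U : Set T}
    (ht : t ∈ generateSetAlgebra 𝒜) (hU : U.indicator (fun _ => 1) ∈ indicatorSpan 𝒜) :
    (t ∩ U).indicator (fun _ => 1) ∈ indicatorSpan 𝒜 := by
  have hring := isSetRing_setOf_indicator_mem h𝒜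
  exact (hring.isSetAlgebra_setOf_inter_mem hU).generateSetAlgebra_subset
    (fun A hA => hring.inter_mem (indicator_mem hA) hU) ht

end indicatorSpan

namespace MeasureTheory.Measure.MeasureDense

variable {X : Type*} [MeasurableSpace X] {μ : Measure X} {𝒜 : Set (Set X)}

theorem image2_inter (h𝒜 : μ.MeasureDense 𝒜) {U : ℕ → Set X} (hU : Monotone U)
    (hUm : ∀ n, MeasurableSet (U n)) (hUuniv : ⋃ n, U n = univ) :
    μ.MeasureDense (image2 (· ∩ ·) 𝒜 (range U)) where
  measurable := by
    rintro _ ⟨t, ht, _, ⟨n, rfl⟩, rfl⟩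
    exact (h𝒜.measurable t ht).inter (hUm n)
  approx s hs hμs ε hε := by
    have hsU : Filter.Tendsto (fun n => μ (s \ U n)) Filter.atTop (nhds 0) := by
      have := tendsto_measure_iInter_atTop (μ := μ) (fun n => (hs.diff (hUm n)).nullMeasurableSet)
        (fun m n hmn => sdiff_subset_sdiff_right (hU hmn))
        ⟨0, ne_top_of_le_ne_top hμs (measure_mono sdiff_subset)⟩
      rwa [← sdiff_iUnion, hUuniv, sdiff_univ, measure_empty] at this
    obtain ⟨N, hN⟩ :=
      (hsU.eventually (gt_mem_nhds (ENNReal.ofReal_pos.2 (half_pos hε)))).exists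
    obtain ⟨t, ht, hst⟩ := h𝒜.approx s hs hμs (ε / 2) (half_pos hε)
    refine ⟨t ∩ U N, mem_image2_of_mem ht ⟨N, rfl⟩, ?_⟩
    have hsub : s ∆ (t ∩ U N) ⊆ s ∆ t ∪ s \ U N := by
      intro x
      simp only [mem_symmDiff, mem_inter_iff, mem_union, mem_sdiff]
      tauto
    calc μ (s ∆ (t ∩ U N)) ≤ μ (s ∆ t) + μ (s \ U N) :=
          (measure_mono hsub).trans (measure_union_le _ _)
      _ < ENNReal.ofReal (ε / 2) + ENNReal.ofReal (ε / 2) := ENNReal.add_lt_add hst hN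
      _ = ENNReal.ofReal ε := by
          rw [← ENNReal.ofReal_add (half_pos hε).le (half_pos hε).le, add_halves]

theorem exists_eLpNorm_indicator_sub_le {E : Type*} [NormedAddCommGroup E]
    (h𝒜 : μ.MeasureDense 𝒜) {p : ℝ≥0∞} (hp : p ≠ ∞) (c : E) {s : Set X} (hs : MeasurableSet s)
    (hμs : μ s ≠ ∞) {ε : ℝ≥0∞} (hε : ε ≠ 0) :
    ∃ t ∈ 𝒜, eLpNorm (t.indicator (fun _ => c) - s.indicator fun _ => c) p μ ≤ ε := by
  obtain ⟨η, hη, hηs⟩ := exists_eLpNorm_indicator_le (μ := μ) hp c hε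
  obtain ⟨t, ht, hst⟩ := h𝒜.approx s hs hμs η hη
  refine ⟨t, ht, le_trans (eLpNorm_mono fun x => ?_) (hηs (s ∆ t) ?_)⟩
  · by_cases hxs : x ∈ s <;> by_cases hxt : x ∈ t <;> simp [mem_symmDiff, hxs, hxt]
  · simpa using hst.le

theorem exists_eLpNorm_sub_le_of_indicator_mem (h𝒜 : μ.MeasureDense 𝒜)
    {S : Submodule ℝ (X → ℝ)} (hS𝒜 : ∀ t ∈ 𝒜, t.indicator (fun _ => 1) ∈ S)
    (hS : ∀ g ∈ S, AEStronglyMeasurable g μ) {p : ℝ≥0∞} (hp : p ≠ ∞) {f : X → ℝ}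
    (hf : MemLp f p μ) {ε : ℝ≥0∞} (hε : ε ≠ 0) : ∃ g ∈ S, eLpNorm (f - g) p μ ≤ ε := by
  have approx_indicator (c : ℝ) ⦃s : Set X⦄ (hs : MeasurableSet s) (hμs : μ s < ∞) ⦃δ : ℝ≥0∞⦄
      (hδ : δ ≠ 0) : ∃ g, eLpNorm (g - s.indicator fun _ => c) p μ ≤ δ ∧ g ∈ S := by
    obtain ⟨t, ht, hst⟩ := h𝒜.exists_eLpNorm_indicator_sub_le hp c hs hμs.ne hδ
    refine ⟨_, hst, ?_⟩
    have hct : t.indicator (fun _ => c) = c • t.indicator (fun _ => (1 : ℝ)) := by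
      ext x
      by_cases hx : x ∈ t <;> simp [hx]
    exact hct ▸ S.smul_mem c (hS𝒜 t ht)
  obtain ⟨g, hg, hgS⟩ :=
    hf.induction_dense hp (· ∈ S) approx_indicator (fun _ _ => S.add_mem) hS hε
  exact ⟨g, hgS, hg⟩

end MeasureTheory.Measure.MeasureDense

theorem eLpNorm_ofReal_eq_lintegral_abs_rpow {X : Type*} [MeasurableSpace X] {μ : Measure X}
    {p : ℝ} (hp : 0 < p) (f : X → ℝ) :
    eLpNorm f (ENNReal.ofReal p) μ = (∫⁻ x, ENNReal.ofReal (|f x| ^ p) ∂μ) ^ (1 / p) := by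
  rw [eLpNorm_eq_lintegral_rpow_enorm_toReal (by simpa using hp) ENNReal.ofReal_ne_top,
    ENNReal.toReal_ofReal hp.le]
  congr 1
  refine lintegral_congr fun x => ?_
  rw [← ENNReal.ofReal_rpow_of_nonneg (abs_nonneg _) hp.le, Real.enorm_eq_ofReal_abs]

theorem indicatorSpan.exists_eLpNorm_sub_le {T : Type*} [m : MeasurableSpace T]
    {𝒜 : Set (Set T)} (h𝒜 : IsPiSystem 𝒜) (hgen : m = MeasurableSpace.generateFrom 𝒜)
    {μ : Measure T} (S : μ.FiniteSpanningSetsIn 𝒜) {p : ℝ≥0∞} (hp : p ≠ ∞) {f : T → ℝ}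
    (hf : MemLp f p μ) {ε : ℝ≥0∞} (hε : ε ≠ 0) :
    ∃ g ∈ indicatorSpan 𝒜, eLpNorm (f - g) p μ ≤ ε := by
  have hU : ∀ n, (accumulate S.set n).indicator (fun _ => 1) ∈ indicatorSpan 𝒜 :=
    (isSetRing_setOf_indicator_mem h𝒜).accumulate_mem fun k => indicator_mem (S.set_mem k)
  have h𝒜m : ∀ A ∈ 𝒜, MeasurableSet A := fun A hA =>
    hgen ▸ MeasurableSpace.measurableSet_generateFrom hA
  have hdense : μ.MeasureDense
      (image2 (· ∩ ·) (generateSetAlgebra 𝒜) (range (accumulate S.set))) :=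
    (Measure.MeasureDense.of_generateFrom_isSetAlgebra_sigmaFinite isSetAlgebra_generateSetAlgebra
      ⟨S.set, fun k => self_subset_generateSetAlgebra (S.set_mem k), S.finite, S.spanning⟩
      (hgen.trans generateFrom_generateSetAlgebra_eq.symm)).image2_inter monotone_accumulate
      (fun n => MeasurableSet.iUnion fun k => MeasurableSet.iUnion fun _ => h𝒜m _ (S.set_mem k))
      (iUnion_accumulate.trans S.spanning)
  refine hdense.exists_eLpNorm_sub_le_of_indicator_mem ?_
    (fun g hg => (indicatorSpan.measurable h𝒜m hg).aestronglyMeasurable) hp hf hε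
  rintro _ ⟨t, ht, _, ⟨n, rfl⟩, rfl⟩
  exact inter_indicator_mem_of_mem_generateSetAlgebra h𝒜 ht (hU n)

theorem stmt_13_general {T : Type*} (𝒜 : Set (Set T))
    (hinter : ∀ A ∈ 𝒜, ∀ B ∈ 𝒜, A ∩ B ∈ 𝒜)
    (Tk : ℕ → Set T) (hTk : ∀ k, Tk k ∈ 𝒜) (hTkU : (⋃ k, Tk k) = Set.univ)
    (μ : @Measure T (MeasurableSpace.generateFrom 𝒜))
    (hμ : ∀ A ∈ 𝒜, μ A < ⊤)
    (p : ℝ) (hp : 1 ≤ p)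
    (f : T → ℝ) (hf : @Measurable T ℝ (MeasurableSpace.generateFrom 𝒜) _ f)
    (hfp : ∫⁻ x, ENNReal.ofReal (|f x| ^ p) ∂μ < ⊤)
    (ε : ℝ) (hε : 0 < ε) :
    ∃ g ∈ Submodule.span ℝ
        ((fun A : Set T => Set.indicator A (fun _ => (1 : ℝ))) '' 𝒜),
      (∫⁻ x, ENNReal.ofReal (|f x - g x| ^ p) ∂μ) ^ (1 / p) < ENNReal.ofReal ε := by
  let _ : MeasurableSpace T := MeasurableSpace.generateFrom 𝒜
  have hp0 : 0 < p := zero_lt_one.trans_le hp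
  have hfLp : MemLp f (ENNReal.ofReal p) μ := ⟨hf.aestronglyMeasurable, by
    rw [eLpNorm_ofReal_eq_lintegral_abs_rpow hp0]
    exact ENNReal.rpow_lt_top_of_nonneg (by positivity) hfp.ne⟩
  have hε' : ENNReal.ofReal ε ≠ 0 := by simpa using hε
  obtain ⟨g, hgS, hg⟩ := indicatorSpan.exists_eLpNorm_sub_le
    (fun A hA B hB _ => hinter A hA B hB) rfl ⟨Tk, hTk, fun k => hμ _ (hTk k), hTkU⟩
    ENNReal.ofReal_ne_top hfLp (ENNReal.half_pos hε').ne'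
  refine ⟨g, hgS, ?_⟩
  calc _ = eLpNorm (f - g) (ENNReal.ofReal p) μ :=
        (eLpNorm_ofReal_eq_lintegral_abs_rpow hp0 (f - g)).symm
    _ ≤ ENNReal.ofReal ε / 2 := hg
    _ < ENNReal.ofReal ε := ENNReal.half_lt_self hε' ENNReal.ofReal_ne_top

/-- **Density of simple functions in `Lᵖ(μ)`.**
If `∅ ∈ 𝒜`, `𝒜` is closed under binary intersections, `T` is a countable union of
elements of `𝒜`, `μ` is a measure on `σ(𝒜)` finite on `𝒜` and `p ∈ [1, ∞)`, then every
measurable `f : T → ℝ` with `∫ |f|^p dμ < ∞` is approximated in `Lᵖ`-norm by elements of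
the `ℝ`-linear span of `{1_A : A ∈ 𝒜}`. -/
theorem stmt_13 {T : Type*} (𝒜 : Set (Set T))
    (hempty : (∅ : Set T) ∈ 𝒜)
    (hinter : ∀ A ∈ 𝒜, ∀ B ∈ 𝒜, A ∩ B ∈ 𝒜)
    (Tk : ℕ → Set T) (hTk : ∀ k, Tk k ∈ 𝒜) (hTkU : (⋃ k, Tk k) = Set.univ)
    (μ : @Measure T (MeasurableSpace.generateFrom 𝒜))
    (hμ : ∀ A ∈ 𝒜, μ A < ⊤)
    (p : ℝ) (hp : 1 ≤ p)
    (f : T → ℝ) (hf : @Measurable T ℝ (MeasurableSpace.generateFrom 𝒜) _ f)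
    (hfp : ∫⁻ x, ENNReal.ofReal (|f x| ^ p) ∂μ < ⊤)
    (ε : ℝ) (hε : 0 < ε) :
    ∃ g ∈ Submodule.span ℝ
        ((fun A : Set T => Set.indicator A (fun _ => (1 : ℝ))) '' 𝒜),
      (∫⁻ x, ENNReal.ofReal (|f x - g x| ^ p) ∂μ) ^ (1 / p) < ENNReal.ofReal ε :=
  stmt_13_general 𝒜 hinter Tk hTk hTkU μ hμ p hp f hf hfp ε hε
end

section
/- Let ν be a measure on ℝ with ν({0}) = 0 and ∫ x² ν(dx) < ∞, and let b ∈ ℝ and σ ∈ ℝ. Define ψ : ℝ → ℂ by ψ(ξ) = i b ξ − σ²ξ²/2 + ∫_ℝ (e^{iξx} − 1 − iξx·1_{|x|≤1}(x)) ν(dx). Then ψ is twice differentiable on ℝ, with ψ'(ξ) = ib − σ²ξ + ∫_ℝ (i x e^{iξx} − i x·1_{|x|≤1}(x)) ν(dx) for all ξ ∈ ℝ; in particular ψ'(0) = i·(b + ∫_{|x|>1} x ν(dx)) and ψ''(0) = −(σ² + ∫_ℝ x² ν(dx)). -/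
open MeasureTheory
open scoped ENNReal

/-!
Differentiate twice under the integral sign. The elementary bounds `|e^{iθ} − 1| ≤ |θ|` and
`|e^{iθ} − 1 − iθ| ≤ θ²` show that, locally uniformly in `ξ`, the integrand and its first two
`ξ`-derivatives are dominated by a constant times `x²`, which is `ν`-integrable. At `ξ = 0` the
first derivative of the integrand is `ix·1_{|x|>1}` and the second is `−x²`.
-/

namespace LevyKhintchine

open Complex

noncomputable section

def integrand (ξ x : ℝ) : ℂ :=
  cexp (I * ξ * x) - 1 - I * ξ * x * (if |x| ≤ 1 then 1 else 0)

def integrandDeriv (ξ x : ℝ) : ℂ :=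
  I * x * cexp (I * ξ * x) - I * x * (if |x| ≤ 1 then 1 else 0)

def integrandDeriv2 (ξ x : ℝ) : ℂ :=
  -(x : ℂ) ^ 2 * cexp (I * ξ * x)

lemma I_mul_ofReal_mul_ofReal (ξ x : ℝ) : I * ξ * x = I * ((ξ * x : ℝ) : ℂ) := by
  push_cast; ring

lemma norm_cexp_I_mul_ofReal_mul (ξ x : ℝ) : ‖cexp (I * ξ * x)‖ = 1 := by
  rw [I_mul_ofReal_mul_ofReal, mul_comm]
  exact norm_exp_ofReal_mul_I _

/-- By `Real.norm_exp_I_mul_ofReal_sub_one_le`, the derivative of `s ↦ e^{is} − is` is bounded by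
`|θ|` on `[−|θ|, |θ|]`; apply the mean value inequality there. -/
lemma norm_cexp_I_mul_ofReal_sub_one_sub_le (θ : ℝ) :
    ‖cexp (I * θ) - 1 - I * θ‖ ≤ θ ^ 2 := by
  have hderiv : ∀ t : ℝ, HasDerivAt (fun s : ℝ => cexp (I * s) - I * s)
      (I * cexp (I * t) - I) t := fun t => by
    have hlin : HasDerivAt (fun s : ℝ => I * (s : ℂ)) I t := by
      simpa using (hasDerivAt_id t).ofReal_comp.const_mul I
    exact (hlin.cexp.sub hlin).congr_deriv (by ring)
  have hmvt := Convex.norm_image_sub_le_of_norm_hasDerivWithin_le (C := |θ|)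
    (fun t _ => (hderiv t).hasDerivWithinAt)
    (fun t (ht : t ∈ Set.Icc (-|θ|) |θ|) => by
      rw [← mul_sub_one, norm_mul, norm_I, one_mul]
      exact Real.norm_exp_I_mul_ofReal_sub_one_le.trans (abs_le.2 ht))
    (convex_Icc _ _) ⟨neg_nonpos.2 (abs_nonneg θ), abs_nonneg θ⟩ ⟨neg_abs_le θ, le_abs_self θ⟩
  calc ‖cexp (I * θ) - 1 - I * θ‖
        = ‖cexp (I * θ) - I * θ - (cexp (I * (0 : ℝ)) - I * (0 : ℝ))‖ := by
        simp only [ofReal_zero, mul_zero, Complex.exp_zero, sub_zero]; ring_nf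
    _ ≤ |θ| * ‖θ - 0‖ := hmvt
    _ = θ ^ 2 := by rw [sub_zero, Real.norm_eq_abs, ← abs_mul, ← sq, abs_sq]

lemma norm_integrand_le (ξ x : ℝ) : ‖integrand ξ x‖ ≤ (ξ ^ 2 + 2) * x ^ 2 := by
  unfold integrand
  by_cases hx : |x| ≤ 1
  · simp only [hx, if_true, mul_one]
    rw [I_mul_ofReal_mul_ofReal]
    calc _ ≤ (ξ * x) ^ 2 := norm_cexp_I_mul_ofReal_sub_one_sub_le _
      _ ≤ (ξ ^ 2 + 2) * x ^ 2 := by nlinarith [sq_nonneg x]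
  · simp only [hx, if_false, mul_zero, sub_zero]
    have := (one_le_sq_iff_one_le_abs x).2 (not_le.1 hx).le
    calc _ ≤ ‖cexp (I * ξ * x)‖ + ‖(1 : ℂ)‖ := norm_sub_le _ _
      _ = 2 := by rw [norm_cexp_I_mul_ofReal_mul, norm_one]; norm_num
      _ ≤ (ξ ^ 2 + 2) * x ^ 2 := by nlinarith [sq_nonneg ξ]

lemma norm_integrandDeriv_le (ξ x : ℝ) : ‖integrandDeriv ξ x‖ ≤ (|ξ| + 1) * x ^ 2 := by
  unfold integrandDeriv
  by_cases hx : |x| ≤ 1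
  · simp only [hx, if_true, mul_one]
    rw [← mul_sub_one, norm_mul, norm_mul, norm_I, one_mul, norm_real, Real.norm_eq_abs,
      I_mul_ofReal_mul_ofReal]
    have hexp : ‖cexp (I * ((ξ * x : ℝ) : ℂ)) - 1‖ ≤ |ξ| * |x| := by
      simpa [abs_mul] using Real.norm_exp_I_mul_ofReal_sub_one_le (x := ξ * x)
    calc |x| * ‖cexp (I * ((ξ * x : ℝ) : ℂ)) - 1‖ ≤ |x| * (|ξ| * |x|) := by gcongr
      _ = |ξ| * x ^ 2 := by rw [← sq_abs x]; ring
      _ ≤ (|ξ| + 1) * x ^ 2 := by nlinarith [sq_nonneg x]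
  · simp only [hx, if_false, mul_zero, sub_zero]
    rw [norm_mul, norm_mul, norm_I, one_mul, norm_real, Real.norm_eq_abs,
      norm_cexp_I_mul_ofReal_mul, mul_one]
    have := (one_le_sq_iff_one_le_abs x).2 (not_le.1 hx).le
    nlinarith [abs_nonneg x, sq_abs x, abs_nonneg ξ]

lemma norm_integrandDeriv2 (ξ x : ℝ) : ‖integrandDeriv2 ξ x‖ = x ^ 2 := by
  rw [integrandDeriv2, norm_mul, norm_neg, norm_pow, norm_real, Real.norm_eq_abs,
    norm_cexp_I_mul_ofReal_mul, mul_one, sq_abs]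

lemma hasDerivAt_I_mul_ofReal_mul (ξ x : ℝ) :
    HasDerivAt (fun s : ℝ => I * s * x) (I * x) ξ := by
  simpa using ((hasDerivAt_id ξ).ofReal_comp.const_mul I).mul_const (x : ℂ)

lemma hasDerivAt_integrand (ξ x : ℝ) :
    HasDerivAt (integrand · x) (integrandDeriv ξ x) ξ := by
  have h := ((hasDerivAt_I_mul_ofReal_mul ξ x).cexp.sub_const 1).sub
    ((hasDerivAt_I_mul_ofReal_mul ξ x).mul_const (if |x| ≤ 1 then (1 : ℂ) else 0))
  exact h.congr_deriv (by unfold integrandDeriv; ring)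

lemma hasDerivAt_integrandDeriv (ξ x : ℝ) :
    HasDerivAt (integrandDeriv · x) (integrandDeriv2 ξ x) ξ := by
  have h := ((hasDerivAt_I_mul_ofReal_mul ξ x).cexp.const_mul (I * x)).sub_const
    (I * x * (if |x| ≤ 1 then (1 : ℂ) else 0))
  refine h.congr_deriv ?_
  unfold integrandDeriv2
  linear_combination ((x : ℂ) ^ 2 * cexp (I * ξ * x)) * I_sq

lemma measurable_truncation : Measurable (fun x : ℝ => if |x| ≤ 1 then (1 : ℂ) else 0) :=
  Measurable.ite (measurableSet_le measurable_abs measurable_const) measurable_const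
    measurable_const

lemma measurable_integrand (ξ : ℝ) : Measurable (integrand ξ) := by
  unfold integrand
  have := measurable_truncation
  fun_prop

lemma measurable_integrandDeriv (ξ : ℝ) : Measurable (integrandDeriv ξ) := by
  unfold integrandDeriv
  have := measurable_truncation
  fun_prop

lemma measurable_integrandDeriv2 (ξ : ℝ) : Measurable (integrandDeriv2 ξ) := by
  unfold integrandDeriv2
  fun_prop

lemma integral_integrandDeriv_zero (ν : Measure ℝ) :
    ∫ x, integrandDeriv 0 x ∂ν = I * ∫ x in {x : ℝ | 1 < |x|}, (x : ℂ) ∂ν := by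
  have hind : integrandDeriv 0 = {x : ℝ | 1 < |x|}.indicator fun x => I * x := by
    funext x
    by_cases hx : |x| ≤ 1
    · simp [integrandDeriv, hx, not_lt.2 hx]
    · simp [integrandDeriv, hx, not_le.1 hx]
  rw [hind, integral_indicator (measurableSet_lt measurable_const measurable_abs),
    integral_const_mul]

variable {ν : Measure ℝ} (hν : Integrable (fun x : ℝ => x ^ 2) ν)
include hν

lemma integrable_integrand (ξ : ℝ) : Integrable (integrand ξ) ν :=
  (hν.const_mul _).mono' (measurable_integrand ξ).aestronglyMeasurable
    (.of_forall (norm_integrand_le ξ))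

lemma hasDerivAt_integral_integrand (ξ₀ : ℝ) :
    HasDerivAt (fun ξ => ∫ x, integrand ξ x ∂ν) (∫ x, integrandDeriv ξ₀ x ∂ν) ξ₀ := by
  refine (hasDerivAt_integral_of_dominated_loc_of_deriv_le (bound := fun x => (|ξ₀| + 2) * x ^ 2)
    (Metric.ball_mem_nhds ξ₀ one_pos)
    (.of_forall fun ξ => (measurable_integrand ξ).aestronglyMeasurable)
    (integrable_integrand hν ξ₀) (measurable_integrandDeriv ξ₀).aestronglyMeasurable
    (.of_forall fun x ξ hξ => ?_) (hν.const_mul _)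
    (.of_forall fun x ξ _ => hasDerivAt_integrand ξ x)).2
  have : |ξ| ≤ |ξ₀| + 1 := by
    have := abs_sub_abs_le_abs_sub ξ ξ₀
    rw [Metric.mem_ball, Real.dist_eq] at hξ
    linarith
  calc ‖integrandDeriv ξ x‖ ≤ (|ξ| + 1) * x ^ 2 := norm_integrandDeriv_le ξ x
    _ ≤ (|ξ₀| + 2) * x ^ 2 := mul_le_mul_of_nonneg_right (by linarith) (sq_nonneg x)

lemma integrable_integrandDeriv (ξ : ℝ) : Integrable (integrandDeriv ξ) ν :=
  (hν.const_mul _).mono' (measurable_integrandDeriv ξ).aestronglyMeasurable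
    (.of_forall (norm_integrandDeriv_le ξ))

lemma hasDerivAt_integral_integrandDeriv (ξ₀ : ℝ) :
    HasDerivAt (fun ξ => ∫ x, integrandDeriv ξ x ∂ν) (∫ x, integrandDeriv2 ξ₀ x ∂ν) ξ₀ :=
  (hasDerivAt_integral_of_dominated_loc_of_deriv_le Filter.univ_mem
    (.of_forall fun ξ => (measurable_integrandDeriv ξ).aestronglyMeasurable)
    (integrable_integrandDeriv hν ξ₀) (measurable_integrandDeriv2 ξ₀).aestronglyMeasurable
    (.of_forall fun x ξ _ => (norm_integrandDeriv2 ξ x).le) hν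
    (.of_forall fun x ξ _ => hasDerivAt_integrandDeriv ξ x)).2

end

end LevyKhintchine

open LevyKhintchine

theorem stmt_14_general (ν : Measure ℝ)
    (hν2 : ∫⁻ x, ENNReal.ofReal (x ^ 2) ∂ν < ⊤)
    (b σ : ℝ) (ψ : ℝ → ℂ)
    (hψ : ∀ ξ : ℝ, ψ ξ =
      Complex.I * (b : ℂ) * (ξ : ℂ) - (σ : ℂ) ^ 2 * (ξ : ℂ) ^ 2 / 2 +
      ∫ x : ℝ, (Complex.exp (Complex.I * (ξ : ℂ) * (x : ℂ)) - 1 -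
        Complex.I * (ξ : ℂ) * (x : ℂ) * (if |x| ≤ 1 then (1 : ℂ) else 0)) ∂ν) :
    ∃ ψ' : ℝ → ℂ,
      (∀ ξ : ℝ, HasDerivAt ψ (ψ' ξ) ξ) ∧
      (∀ ξ : ℝ, ψ' ξ =
        Complex.I * (b : ℂ) - (σ : ℂ) ^ 2 * (ξ : ℂ) +
        ∫ x : ℝ, (Complex.I * (x : ℂ) * Complex.exp (Complex.I * (ξ : ℂ) * (x : ℂ)) -
          Complex.I * (x : ℂ) * (if |x| ≤ 1 then (1 : ℂ) else 0)) ∂ν) ∧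
      (∃ ψ'' : ℝ → ℂ,
        (∀ ξ : ℝ, HasDerivAt ψ' (ψ'' ξ) ξ) ∧
        ψ' 0 = Complex.I * ((b : ℂ) + ∫ x in {x : ℝ | 1 < |x|}, (x : ℂ) ∂ν) ∧
        ψ'' 0 = -((σ : ℂ) ^ 2 + ∫ x : ℝ, (x : ℂ) ^ 2 ∂ν)) := by
  have hν : Integrable (fun x : ℝ => x ^ 2) ν :=
    (lintegral_ofReal_ne_top_iff_integrable (by fun_prop) (.of_forall fun x => sq_nonneg x)).1
      hν2.ne
  have hquadratic (ξ : ℝ) : HasDerivAt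
      (fun ξ : ℝ => Complex.I * b * ξ - (σ : ℂ) ^ 2 * (ξ : ℂ) ^ 2 / 2)
      (Complex.I * b - σ ^ 2 * ξ) ξ :=
    ((((hasDerivAt_id (ξ : ℂ)).const_mul (Complex.I * b)).sub
      (((hasDerivAt_pow 2 (ξ : ℂ)).const_mul ((σ : ℂ) ^ 2)).div_const 2)).comp_ofReal).congr_deriv
      (by ring)
  have hlinear (ξ : ℝ) : HasDerivAt
      (fun ξ : ℝ => Complex.I * b - (σ : ℂ) ^ 2 * ξ) (-(σ : ℂ) ^ 2) ξ :=
    (((hasDerivAt_id (ξ : ℂ)).const_mul ((σ : ℂ) ^ 2)).const_sub (Complex.I * b)).comp_ofReal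
      |>.congr_deriv (by simp)
  refine ⟨fun ξ => Complex.I * b - σ ^ 2 * ξ + ∫ x, integrandDeriv ξ x ∂ν, fun ξ => ?_,
    fun ξ => rfl, fun ξ => -σ ^ 2 + ∫ x, integrandDeriv2 ξ x ∂ν,
    fun ξ => (hlinear ξ).add (hasDerivAt_integral_integrandDeriv hν ξ), ?_, ?_⟩
  · rw [funext hψ]
    exact (hquadratic ξ).add (hasDerivAt_integral_integrand hν ξ)
  · simp [integral_integrandDeriv_zero, mul_add]
  · simp [integrandDeriv2, integral_neg]
    ring

/-- **Differentiability of the Lévy–Khintchine exponent.**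
Let `ν` be a measure on `ℝ` with `ν {0} = 0` and `∫ x² ν(dx) < ∞`, `b σ ∈ ℝ`, and let
`ψ(ξ) = i b ξ − σ²ξ²/2 + ∫ (e^{iξx} − 1 − iξx·1_{|x|≤1}) ν(dx)`. Then `ψ` is twice
differentiable on `ℝ`, its derivative is
`ψ'(ξ) = ib − σ²ξ + ∫ (ixe^{iξx} − ix·1_{|x|≤1}) ν(dx)`; in particular
`ψ'(0) = i(b + ∫_{|x|>1} x ν(dx))` and `ψ''(0) = −(σ² + ∫ x² ν(dx))`. -/
theorem stmt_14 (ν : Measure ℝ) (hν0 : ν {0} = 0)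
    (hν2 : ∫⁻ x, ENNReal.ofReal (x ^ 2) ∂ν < ⊤)
    (b σ : ℝ) (ψ : ℝ → ℂ)
    (hψ : ∀ ξ : ℝ, ψ ξ =
      Complex.I * (b : ℂ) * (ξ : ℂ) - (σ : ℂ) ^ 2 * (ξ : ℂ) ^ 2 / 2 +
      ∫ x : ℝ, (Complex.exp (Complex.I * (ξ : ℂ) * (x : ℂ)) - 1 -
        Complex.I * (ξ : ℂ) * (x : ℂ) * (if |x| ≤ 1 then (1 : ℂ) else 0)) ∂ν) :
    ∃ ψ' : ℝ → ℂ,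
      (∀ ξ : ℝ, HasDerivAt ψ (ψ' ξ) ξ) ∧
      (∀ ξ : ℝ, ψ' ξ =
        Complex.I * (b : ℂ) - (σ : ℂ) ^ 2 * (ξ : ℂ) +
        ∫ x : ℝ, (Complex.I * (x : ℂ) * Complex.exp (Complex.I * (ξ : ℂ) * (x : ℂ)) -
          Complex.I * (x : ℂ) * (if |x| ≤ 1 then (1 : ℂ) else 0)) ∂ν) ∧
      (∃ ψ'' : ℝ → ℂ,
        (∀ ξ : ℝ, HasDerivAt ψ' (ψ'' ξ) ξ) ∧
        ψ' 0 = Complex.I * ((b : ℂ) + ∫ x in {x : ℝ | 1 < |x|}, (x : ℂ) ∂ν) ∧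
        ψ'' 0 = -((σ : ℂ) ^ 2 + ∫ x : ℝ, (x : ℂ) ^ 2 ∂ν)) :=
  stmt_14_general ν hν2 b σ ψ hψ
end

section
/- Let T be a set, 𝒜 a collection of subsets of T closed under binary intersections, d a contractive pseudometric on 𝒜, h : Set T → ℝ a function, and A ∈ 𝒜. Define S₁ := {α ∈ ℝ : α ≥ 0 and there exist M ≥ 0 and ρ₀ > 0 such that for all ρ ∈ (0, ρ₀) and all A' ∈ 𝒜 with d(A,A') < ρ, |h(A) − h(A')| ≤ M·ρ^α}, and S₂ := {α ∈ ℝ : α ≥ 0 and there exist M ≥ 0 and ρ₀ > 0 such that for all ρ ∈ (0, ρ₀) and all A₀, A₁ ∈ 𝒜 with A₀ ⊆ A₁, d(A,A₀) < ρ and d(A,A₁) < ρ, |h(A₁) − h(A₀)| ≤ M·ρ^α}. Then S₁ = S₂; consequently the pointwise Hölder exponent α_h(A) = sup S₁ coincides with the pointwise Hölder 𝒞-exponent α_{h,𝒞}(A) = sup S₂ (with the convention sup ∅ = 0). -/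
/-- **The pointwise Hölder exponent and the Hölder `𝒞`-exponent coincide.**
Let `𝒜` be closed under binary intersections and `d` a contractive pseudometric on `𝒜`.
Then the set `S₁` of admissible Hölder exponents for `h` at `A` (via increments
`h(A) − h(A')`) equals the set `S₂` of admissible `𝒞`-exponents (via increments
`h(A₁) − h(A₀)` over nested pairs `A₀ ⊆ A₁` in the ball), and hence `sup S₁ = sup S₂`
(with `sup ∅ = 0` by Lean's convention on `ℝ`). -/
theorem stmt_15 {T : Type*} (𝒜 : Set (Set T))
    (hinter : ∀ A ∈ 𝒜, ∀ B ∈ 𝒜, A ∩ B ∈ 𝒜)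
    (d : Set T → Set T → ℝ)
    (hnn : ∀ A ∈ 𝒜, ∀ B ∈ 𝒜, 0 ≤ d A B)
    (hsymm : ∀ A ∈ 𝒜, ∀ B ∈ 𝒜, d A B = d B A)
    (htri : ∀ A ∈ 𝒜, ∀ B ∈ 𝒜, ∀ C ∈ 𝒜, d A C ≤ d A B + d B C)
    (hrefl : ∀ A ∈ 𝒜, d A A = 0)
    (hcontr : ∀ A ∈ 𝒜, ∀ A' ∈ 𝒜, ∀ A'' ∈ 𝒜, d (A ∩ A'') (A' ∩ A'') ≤ d A A')
    (h : Set T → ℝ) (A : Set T) (hA : A ∈ 𝒜) :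
    ({α : ℝ | 0 ≤ α ∧ ∃ M : ℝ, 0 ≤ M ∧ ∃ ρ₀ : ℝ, 0 < ρ₀ ∧
        ∀ ρ : ℝ, 0 < ρ → ρ < ρ₀ → ∀ A' ∈ 𝒜, d A A' < ρ →
          |h A - h A'| ≤ M * ρ ^ α} =
      {α : ℝ | 0 ≤ α ∧ ∃ M : ℝ, 0 ≤ M ∧ ∃ ρ₀ : ℝ, 0 < ρ₀ ∧
        ∀ ρ : ℝ, 0 < ρ → ρ < ρ₀ → ∀ A₀ ∈ 𝒜, ∀ A₁ ∈ 𝒜, A₀ ⊆ A₁ →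
          d A A₀ < ρ → d A A₁ < ρ → |h A₁ - h A₀| ≤ M * ρ ^ α}) ∧
    sSup {α : ℝ | 0 ≤ α ∧ ∃ M : ℝ, 0 ≤ M ∧ ∃ ρ₀ : ℝ, 0 < ρ₀ ∧
        ∀ ρ : ℝ, 0 < ρ → ρ < ρ₀ → ∀ A' ∈ 𝒜, d A A' < ρ →
          |h A - h A'| ≤ M * ρ ^ α} =
      sSup {α : ℝ | 0 ≤ α ∧ ∃ M : ℝ, 0 ≤ M ∧ ∃ ρ₀ : ℝ, 0 < ρ₀ ∧
        ∀ ρ : ℝ, 0 < ρ → ρ < ρ₀ → ∀ A₀ ∈ 𝒜, ∀ A₁ ∈ 𝒜, A₀ ⊆ A₁ →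
          d A A₀ < ρ → d A A₁ < ρ → |h A₁ - h A₀| ≤ M * ρ ^ α} := by
  have key : ({α : ℝ | 0 ≤ α ∧ ∃ M : ℝ, 0 ≤ M ∧ ∃ ρ₀ : ℝ, 0 < ρ₀ ∧
        ∀ ρ : ℝ, 0 < ρ → ρ < ρ₀ → ∀ A' ∈ 𝒜, d A A' < ρ →
          |h A - h A'| ≤ M * ρ ^ α} =
      {α : ℝ | 0 ≤ α ∧ ∃ M : ℝ, 0 ≤ M ∧ ∃ ρ₀ : ℝ, 0 < ρ₀ ∧
        ∀ ρ : ℝ, 0 < ρ → ρ < ρ₀ → ∀ A₀ ∈ 𝒜, ∀ A₁ ∈ 𝒜, A₀ ⊆ A₁ →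
          d A A₀ < ρ → d A A₁ < ρ → |h A₁ - h A₀| ≤ M * ρ ^ α}) := by
    ext α
    simp only [Set.mem_setOf_eq]
    constructor
    · rintro ⟨hα, M, hM, ρ₀, hρ₀, hb⟩
      refine ⟨hα, 2 * M, by linarith, ρ₀, hρ₀, ?_⟩
      intro ρ hρ hρρ A₀ hA₀ A₁ hA₁ _ hd₀ hd₁
      have e0 := hb ρ hρ hρρ A₀ hA₀ hd₀
      have e1 := hb ρ hρ hρρ A₁ hA₁ hd₁
      have : |h A₁ - h A₀| ≤ |h A - h A₁| + |h A - h A₀| := by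
        calc |h A₁ - h A₀| = |(h A - h A₀) - (h A - h A₁)| := by ring_nf
          _ ≤ |h A - h A₀| + |h A - h A₁| := abs_sub _ _
          _ = |h A - h A₁| + |h A - h A₀| := by ring
      nlinarith [this]
    · rintro ⟨hα, M, hM, ρ₀, hρ₀, hb⟩
      refine ⟨hα, 2 * M, by linarith, ρ₀, hρ₀, ?_⟩
      intro ρ hρ hρρ A' hA' hd
      have hAI : A ∩ A' ∈ 𝒜 := hinter A hA A' hA'
      have hdI : d A (A ∩ A') < ρ := by
        have := hcontr A hA A' hA' A hA
        rw [Set.inter_self, Set.inter_comm A' A] at this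
        linarith
      have e0 := hb ρ hρ hρρ (A ∩ A') hAI A hA Set.inter_subset_left
        hdI (by rw [hrefl A hA]; exact hρ)
      have e1 := hb ρ hρ hρρ (A ∩ A') hAI A' hA' Set.inter_subset_right hdI hd
      have : |h A - h A'| ≤ |h A - h (A ∩ A')| + |h A' - h (A ∩ A')| := by
        calc |h A - h A'| = |(h A - h (A ∩ A')) - (h A' - h (A ∩ A'))| := by ring_nf
          _ ≤ |h A - h (A ∩ A')| + |h A' - h (A ∩ A')| := abs_sub _ _
      nlinarith [this]
  exact ⟨key, by rw [key]⟩
end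

section
/- Let T be a set, 𝒜 a collection of subsets of T, and d a pseudometric on 𝒜. Let J : T → ℝ be a function, Π := {s ∈ T : J(s) ≠ 0}, L ⊆ T a subset, and δ > 0. For j ∈ ℕ define E_j := ⋃_{s ∈ Π ∩ L, 2^{-j} ≤ |J(s)| < 2^{-(j-1)}} {A ∈ 𝒜 : qd(s, A) < |J(s)|^δ}, and E := ⋂_{k∈ℕ} ⋃_{j ≥ k} E_j. If A ∈ E, then there exists a sequence (s_k)_{k∈ℕ} of points of Π ∩ L such that qd(s_k, A) → 0 and |J(s_k)| → 0 as k → ∞, and liminf_{k→∞} log |J(s_k)| / log(qd(s_k, A)) ≤ 1/δ (where qd(s_k,A) is interpreted as a real number, the logarithm of 0 taken as 0 and division by 0 as 0). -/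
open Filter
open scoped ENNReal

/-!
Along the limsup set pick, for every `k`, some `j_k ≥ k` with `A ∈ E_{j_k}` and a witness `s_k`.
Then `|J(s_k)| < 2^{1-k} → 0` and `qd(s_k, A) < |J(s_k)|^δ → 0`. Once `|J(s_k)| < 1`, taking
logarithms of `qd(s_k, A) < |J(s_k)|^δ` (both sides negative) gives
`0 ≤ log |J(s_k)| / log qd(s_k, A) ≤ 1/δ`, and the case `qd(s_k, A) = 0` gives the junk value `0`.
-/

open Topology

theorem tendsto_zpow_sub_natCast_atTop_zero {a : ℝ} (ha : 1 < a) (m : ℤ) :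
    Tendsto (fun k : ℕ => a ^ (m - k)) atTop (𝓝 0) := by
  have ha₀ : a ≠ 0 := by positivity
  have h := (tendsto_pow_atTop_nhds_zero_of_lt_one (inv_nonneg.2 (by positivity))
    (inv_lt_one_of_one_lt₀ ha)).const_mul (a ^ m)
  rw [mul_zero] at h
  refine h.congr fun k => ?_
  rw [zpow_sub₀ ha₀, zpow_natCast, inv_pow, div_eq_mul_inv]

theorem ENNReal.tendsto_zero_of_le_ofReal_rpow {ι : Type*} {l : Filter ι} {f : ι → ℝ≥0∞}
    {u : ι → ℝ} {δ : ℝ} (hδ : 0 < δ) (hu : Tendsto u l (𝓝 0))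
    (hf : ∀ i, f i ≤ ENNReal.ofReal (u i ^ δ)) : Tendsto f l (𝓝 0) := by
  have hrpow : Tendsto (fun i => u i ^ δ) l (𝓝 0) := by
    simpa [Real.zero_rpow hδ.ne'] using hu.rpow_const (Or.inr hδ.le)
  have hofReal := ENNReal.tendsto_ofReal hrpow
  rw [ENNReal.ofReal_zero] at hofReal
  exact tendsto_of_tendsto_of_tendsto_of_le_of_le tendsto_const_nhds hofReal
    (fun _ => zero_le) hf

theorem Real.log_div_log_mem_Icc_of_lt_rpow {x y δ : ℝ} (hδ : 0 < δ) (hx₀ : 0 < x)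
    (hx₁ : x < 1) (hy : 0 ≤ y) (hyx : y < x ^ δ) :
    Real.log x / Real.log y ∈ Set.Icc 0 (1 / δ) := by
  have hlogx : Real.log x < 0 := Real.log_neg hx₀ hx₁
  rcases hy.eq_or_lt with rfl | hy₀
  · simp [hδ.le]
  have hlogy : Real.log y < δ * Real.log x := by
    calc Real.log y < Real.log (x ^ δ) := Real.log_lt_log hy₀ hyx
      _ = δ * Real.log x := Real.log_rpow hx₀ δ
  have hlogy₀ : Real.log y < 0 := hlogy.trans (mul_neg_of_pos_of_neg hδ hlogx)
  refine ⟨div_nonneg_of_nonpos hlogx.le hlogy₀.le, ?_⟩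
  rw [div_le_iff_of_neg hlogy₀, one_div, ← div_eq_inv_mul, div_le_iff₀ hδ, mul_comm]
  exact hlogy.le

theorem stmt_16_general {T : Type*} (𝒜 : Set (Set T)) (d : Set T → Set T → ℝ)
    (J : T → ℝ) (L : Set T) (δ : ℝ) (hδ : 0 < δ) (A : Set T)
    (hA : A ∈ ⋂ k : ℕ, ⋃ j : ℕ, ⋃ (_ : k ≤ j),
      {A' ∈ 𝒜 | ∃ s : T, J s ≠ 0 ∧ s ∈ L ∧
        (2 : ℝ) ^ (-(j : ℤ)) ≤ |J s| ∧ |J s| < (2 : ℝ) ^ (1 - (j : ℤ)) ∧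
        qd 𝒜 d s A' < ENNReal.ofReal (|J s| ^ δ)}) :
    ∃ s : ℕ → T,
      (∀ k, J (s k) ≠ 0 ∧ s k ∈ L) ∧
      Tendsto (fun k => qd 𝒜 d (s k) A) atTop (nhds 0) ∧
      Tendsto (fun k => |J (s k)|) atTop (nhds 0) ∧
      liminf (fun k => Real.log |J (s k)| /
        Real.log ((qd 𝒜 d (s k) A).toReal)) atTop ≤ 1 / δ := by
  simp only [Set.mem_iInter, Set.mem_iUnion, Set.mem_ofPred_eq] at hA
  choose j hj _ s hs₀ hsL _ hJj hqd using hA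
  have hJk : ∀ k, |J (s k)| < 2 ^ (1 - (k : ℤ)) := fun k =>
    (hJj k).trans_le (zpow_le_zpow_right₀ one_le_two (by have := hj k; omega))
  have hJ : Tendsto (fun k => |J (s k)|) atTop (𝓝 0) :=
    squeeze_zero (fun _ => abs_nonneg _) (fun k => (hJk k).le)
      (tendsto_zpow_sub_natCast_atTop_zero one_lt_two 1)
  refine ⟨s, fun k => ⟨hs₀ k, hsL k⟩,
    ENNReal.tendsto_zero_of_le_ofReal_rpow hδ hJ fun k => (hqd k).le, hJ, ?_⟩
  have hmem : ∀ᶠ k in atTop, Real.log |J (s k)| / Real.log ((qd 𝒜 d (s k) A).toReal) ∈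
      Set.Icc 0 (1 / δ) := by
    filter_upwards [eventually_ge_atTop 1] with k hk
    refine Real.log_div_log_mem_Icc_of_lt_rpow hδ (abs_pos.2 (hs₀ k)) ?_
      ENNReal.toReal_nonneg (ENNReal.toReal_lt_of_lt_ofReal (hqd k))
    exact (hJk k).trans_le (zpow_le_one_of_nonpos₀ one_le_two (by omega))
  exact liminf_le_of_frequently_le (hmem.mono fun _ h => h.2).frequently
    ⟨0, hmem.mono fun _ h => h.1⟩

/-- **Jaffard-type bound from the limsup set `E = limsup_j E_j`:**
if `A ∈ E := ⋂ₖ ⋃_{j ≥ k} E_j` where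
`E_j = ⋃_{s ∈ Π ∩ L, 2^{-j} ≤ |J(s)| < 2^{-(j-1)}} {A' ∈ 𝒜 : qd(s, A') < |J(s)|^δ}`,
then there is a sequence `(s_k)` of points of `Π ∩ L` with `qd(s_k, A) → 0`,
`|J(s_k)| → 0`, and `liminf_k log |J(s_k)| / log (qd(s_k, A)) ≤ 1/δ`
(`Real.log 0 = 0` and `x / 0 = 0` by convention). -/
theorem stmt_16 {T : Type*} (𝒜 : Set (Set T)) (d : Set T → Set T → ℝ)
    (hnn : ∀ A ∈ 𝒜, ∀ B ∈ 𝒜, 0 ≤ d A B)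
    (hsymm : ∀ A ∈ 𝒜, ∀ B ∈ 𝒜, d A B = d B A)
    (htri : ∀ A ∈ 𝒜, ∀ B ∈ 𝒜, ∀ C ∈ 𝒜, d A C ≤ d A B + d B C)
    (hrefl : ∀ A ∈ 𝒜, d A A = 0)
    (J : T → ℝ) (L : Set T) (δ : ℝ) (hδ : 0 < δ) (A : Set T)
    (hA : A ∈ ⋂ k : ℕ, ⋃ j : ℕ, ⋃ (_ : k ≤ j),
      {A' ∈ 𝒜 | ∃ s : T, J s ≠ 0 ∧ s ∈ L ∧
        (2 : ℝ) ^ (-(j : ℤ)) ≤ |J s| ∧ |J s| < (2 : ℝ) ^ (1 - (j : ℤ)) ∧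
        qd 𝒜 d s A' < ENNReal.ofReal (|J s| ^ δ)}) :
    ∃ s : ℕ → T,
      (∀ k, J (s k) ≠ 0 ∧ s k ∈ L) ∧
      Tendsto (fun k => qd 𝒜 d (s k) A) atTop (nhds 0) ∧
      Tendsto (fun k => |J (s k)|) atTop (nhds 0) ∧
      liminf (fun k => Real.log |J (s k)| /
        Real.log ((qd 𝒜 d (s k) A).toReal)) atTop ≤ 1 / δ :=
  stmt_16_general 𝒜 d J L δ hδ A hA
end

section
/- Let ν be a measure on ℝ with ν({0}) = 0 and ∫ min(1, x²) ν(dx) < ∞. Define the Blumenthal–Getoor exponent β := inf{δ ∈ ℝ : δ > 0 and ∫_{|x|≤1} |x|^δ ν(dx) < ∞}, and for j ∈ ℕ set ν_j := ν({x ∈ ℝ : 2^{-j} ≤ |x| < 2^{-(j-1)}}). Then: (i) there exists a constant C < ∞ such that ν_j ≤ C·8^j for every j ∈ ℕ; (ii) for every real γ with 0 ≤ γ < β, the set {j ∈ ℕ : ν_j ≥ 2^{jγ}} is infinite. -/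
/-!
On `Γ_j` we have `min 1 x² ≥ 4⁻ʲ`, so Chebyshev's inequality gives `ν_j ≤ 4ʲ ∫ min 1 x² dν`.
For (ii), if `ν_j < 2^{jγ}` for all large `j`, pick `γ < δ < β`. Since `ν {0} = 0`, the annuli
cover `{|x| ≤ 1}` up to a null set, and `|x|^δ ≤ 2^{(1-j)δ}` on `Γ_j`, so
`∫_{|x|≤1} |x|^δ dν ≤ 2^δ ∑ 2^{-jδ} ν_j`, which is eventually dominated by the convergent
geometric series `∑ 2^{j(γ-δ)}`. Hence `δ` is admissible in the infimum defining `β`,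
contradicting `δ < β`.
-/

open Filter MeasureTheory
open scoped ENNReal

lemma ENNReal.tsum_ne_top_of_eventually_le {α : Type*} {f g : α → ℝ≥0∞} (hf : ∀ a, f a ≠ ∞)
    (hfg : ∀ᶠ a in cofinite, f a ≤ g a) (hg : ∑' a, g a ≠ ∞) : ∑' a, f a ≠ ∞ := by
  set s := (eventually_cofinite.1 hfg).toFinset
  have hcompl : ∑' a : ↥(s : Set α)ᶜ, f a ≤ ∑' a, g a :=
    calc ∑' a : ↥(s : Set α)ᶜ, f a ≤ ∑' a : ↥(s : Set α)ᶜ, g a :=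
          ENNReal.tsum_le_tsum fun a => by simpa [s] using a.2
      _ ≤ ∑' a, g a := ENNReal.tsum_comp_le_tsum_of_injective Subtype.val_injective g
  rw [← ENNReal.sum_add_tsum_compl s]
  exact ENNReal.add_ne_top.2 ⟨ENNReal.sum_ne_top.2 fun a _ => hf a, ne_top_of_le_ne_top hg hcompl⟩

lemma ENNReal.tsum_pow_mul_ne_top_of_eventually_le_pow {r s : ℝ≥0∞} {a : ℕ → ℝ≥0∞}
    (hr : r ≠ ∞) (hrs : r * s < 1) (ha : ∀ j, a j ≠ ∞) (has : ∀ᶠ j in atTop, a j ≤ s ^ j) :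
    ∑' j, r ^ j * a j ≠ ∞ := by
  refine ENNReal.tsum_ne_top_of_eventually_le (g := fun j => (r * s) ^ j)
    (fun j => ENNReal.mul_ne_top (ENNReal.pow_ne_top hr) (ha j)) ?_
    (tsum_geometric_lt_top.2 hrs).ne
  rw [Nat.cofinite_eq_atTop]
  filter_upwards [has] with j hj
  rw [mul_pow]
  gcongr

def dyadicAnnulus (j : ℕ) : Set ℝ :=
  {x | (2 : ℝ) ^ (-(j : ℤ)) ≤ |x| ∧ |x| < (2 : ℝ) ^ (1 - (j : ℤ))}

lemma exists_mem_dyadicAnnulus {x : ℝ} (hx : x ≠ 0) (hx1 : |x| ≤ 1) :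
    ∃ j, x ∈ dyadicAnnulus j := by
  obtain ⟨n, hn1, hn2⟩ := exists_mem_Ico_zpow (abs_pos.2 hx) (one_lt_two (α := ℝ))
  have hn : n ≤ 0 := by
    by_contra! h
    have : (2 : ℝ) ^ (1 : ℤ) ≤ 2 ^ n := zpow_le_zpow_right₀ one_le_two h
    linarith [zpow_one (2 : ℝ)]
  refine ⟨(-n).toNat, ?_, ?_⟩ <;> rw [Int.toNat_of_nonneg (by omega)]
  · rwa [neg_neg]
  · rwa [sub_neg_eq_add, add_comm]

lemma one_le_four_pow_mul_min_one_sq {j : ℕ} {x : ℝ} (hx : x ∈ dyadicAnnulus j) :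
    1 ≤ 4 ^ j * min 1 (x ^ 2) := by
  have h : ((2 : ℝ) ^ j)⁻¹ ≤ |x| := by simpa only [zpow_neg, zpow_natCast] using hx.1
  have h4 : (1 : ℝ) ≤ 4 ^ j := one_le_pow₀ (by norm_num)
  have hsq : 1 ≤ (4 : ℝ) ^ j * x ^ 2 :=
    calc (1 : ℝ) = 4 ^ j * (((2 : ℝ) ^ j)⁻¹) ^ 2 := by
          rw [inv_pow, ← pow_mul, mul_comm j, pow_mul]; norm_num
      _ ≤ 4 ^ j * |x| ^ 2 := by gcongr
      _ = 4 ^ j * x ^ 2 := by rw [sq_abs]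
  rcases min_cases 1 (x ^ 2) with ⟨hmin, -⟩ | ⟨hmin, -⟩ <;> rw [hmin]
  · linarith
  · exact hsq

lemma measure_dyadicAnnulus_le (ν : Measure ℝ) (j : ℕ) :
    ν (dyadicAnnulus j) ≤ 4 ^ j * ∫⁻ x, ENNReal.ofReal (min 1 (x ^ 2)) ∂ν :=
  calc ν (dyadicAnnulus j) = ∫⁻ _ in dyadicAnnulus j, 1 ∂ν := (setLIntegral_one _).symm
    _ ≤ ∫⁻ x in dyadicAnnulus j, 4 ^ j * ENNReal.ofReal (min 1 (x ^ 2)) ∂ν := by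
        refine setLIntegral_mono (by fun_prop) fun x hx => ?_
        rw [← ENNReal.ofReal_ofNat 4, ← ENNReal.ofReal_pow (by norm_num),
          ← ENNReal.ofReal_mul (by positivity)]
        exact ENNReal.one_le_ofReal.2 (one_le_four_pow_mul_min_one_sq hx)
    _ ≤ ∫⁻ x, 4 ^ j * ENNReal.ofReal (min 1 (x ^ 2)) ∂ν := setLIntegral_le_lintegral _ _
    _ = 4 ^ j * ∫⁻ x, ENNReal.ofReal (min 1 (x ^ 2)) ∂ν := lintegral_const_mul _ (by fun_prop)

lemma abs_rpow_le_of_mem_dyadicAnnulus {δ : ℝ} (hδ : 0 ≤ δ) {j : ℕ} {x : ℝ}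
    (hx : x ∈ dyadicAnnulus j) : |x| ^ δ ≤ 2 ^ δ * (2 ^ (-δ)) ^ j :=
  calc |x| ^ δ ≤ ((2 : ℝ) ^ (1 - (j : ℤ))) ^ δ := by gcongr; exact hx.2.le
    _ = 2 ^ δ * (2 ^ (-δ)) ^ j := by
        rw [zpow_sub₀ two_ne_zero, zpow_one, zpow_natCast, div_eq_mul_inv,
          Real.mul_rpow (by norm_num) (by positivity), Real.inv_rpow (by positivity),
          Real.rpow_neg (by norm_num), inv_pow, ← Real.rpow_natCast_mul (by norm_num),
          mul_comm (j : ℝ), ← Real.rpow_mul_natCast (by norm_num), mul_comm]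

lemma setLIntegral_abs_rpow_le_tsum {ν : Measure ℝ} (hν0 : ν {0} = 0) {δ : ℝ} (hδ : 0 ≤ δ) :
    ∫⁻ x in {x : ℝ | |x| ≤ 1}, ENNReal.ofReal (|x| ^ δ) ∂ν ≤
      ENNReal.ofReal (2 ^ δ) * ∑' j, ENNReal.ofReal (2 ^ (-δ)) ^ j * ν (dyadicAnnulus j) := by
  have hcover : {x : ℝ | |x| ≤ 1} ≤ᵐ[ν] ⋃ j, dyadicAnnulus j := by
    filter_upwards [measure_eq_zero_iff_ae_notMem.1 hν0] with x hx h1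
    exact Set.mem_iUnion.2 (exists_mem_dyadicAnnulus hx h1)
  calc ∫⁻ x in {x : ℝ | |x| ≤ 1}, ENNReal.ofReal (|x| ^ δ) ∂ν
      ≤ ∫⁻ x in ⋃ j, dyadicAnnulus j, ENNReal.ofReal (|x| ^ δ) ∂ν := lintegral_mono_set' hcover
    _ ≤ ∑' j, ∫⁻ x in dyadicAnnulus j, ENNReal.ofReal (|x| ^ δ) ∂ν := lintegral_iUnion_le _ _
    _ ≤ ∑' j, ENNReal.ofReal (2 ^ δ) * (ENNReal.ofReal (2 ^ (-δ)) ^ j * ν (dyadicAnnulus j)) :=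
        ENNReal.tsum_le_tsum fun j =>
          calc ∫⁻ x in dyadicAnnulus j, ENNReal.ofReal (|x| ^ δ) ∂ν
              ≤ ∫⁻ _ in dyadicAnnulus j, ENNReal.ofReal (2 ^ δ * (2 ^ (-δ)) ^ j) ∂ν :=
                setLIntegral_mono (by fun_prop) fun x hx =>
                  ENNReal.ofReal_le_ofReal (abs_rpow_le_of_mem_dyadicAnnulus hδ hx)
            _ = _ := by
                rw [setLIntegral_const, ENNReal.ofReal_mul (by positivity),
                  ENNReal.ofReal_pow (by positivity), mul_assoc]
    _ = _ := ENNReal.tsum_mul_left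

lemma setLIntegral_abs_rpow_lt_top_of_eventually_le {ν : Measure ℝ} (hν0 : ν {0} = 0)
    (hfin : ∀ j, ν (dyadicAnnulus j) ≠ ∞) {γ δ : ℝ} (hγδ : γ < δ) (hδ : 0 ≤ δ)
    (hev : ∀ᶠ j in atTop, ν (dyadicAnnulus j) ≤ ENNReal.ofReal (2 ^ γ) ^ j) :
    ∫⁻ x in {x : ℝ | |x| ≤ 1}, ENNReal.ofReal (|x| ^ δ) ∂ν < ∞ := by
  have hrs : ENNReal.ofReal (2 ^ (-δ)) * ENNReal.ofReal (2 ^ γ) < 1 := by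
    rw [← ENNReal.ofReal_mul (by positivity), ← Real.rpow_add two_pos, ENNReal.ofReal_lt_one]
    exact Real.rpow_lt_one_of_one_lt_of_neg one_lt_two (by linarith)
  exact (setLIntegral_abs_rpow_le_tsum hν0 hδ).trans_lt <| ENNReal.mul_lt_top ENNReal.ofReal_lt_top
    (ENNReal.tsum_pow_mul_ne_top_of_eventually_le_pow ENNReal.ofReal_ne_top hrs hfin hev).lt_top

/-- **Estimates on `ν_j = ν(Γ_j)` for a Lévy measure `ν`.**
Let `ν` be a measure on `ℝ` with `ν {0} = 0` and `∫ min(1, x²) ν(dx) < ∞`, let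
`β := inf {δ > 0 : ∫_{|x|≤1} |x|^δ ν(dx) < ∞}` be the Blumenthal–Getoor exponent and
`ν_j := ν {x : 2^{-j} ≤ |x| < 2^{-(j-1)}}`. Then (i) `ν_j ≤ C·8^j` for some finite `C`,
and (ii) for every `0 ≤ γ < β` the set `{j : ν_j ≥ 2^{jγ}}` is infinite. -/
theorem stmt_17 (ν : Measure ℝ) (hν0 : ν {0} = 0)
    (hν : ∫⁻ x, ENNReal.ofReal (min 1 (x ^ 2)) ∂ν < ⊤) :
    (∃ C : ℝ≥0∞, C < ⊤ ∧ ∀ j : ℕ,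
      ν {x : ℝ | (2 : ℝ) ^ (-(j : ℤ)) ≤ |x| ∧ |x| < (2 : ℝ) ^ (1 - (j : ℤ))} ≤
        C * 8 ^ j) ∧
    (∀ γ : ℝ, 0 ≤ γ →
      γ < sInf {δ : ℝ | 0 < δ ∧
        ∫⁻ x in {x : ℝ | |x| ≤ 1}, ENNReal.ofReal (|x| ^ δ) ∂ν < ⊤} →
      {j : ℕ | ENNReal.ofReal ((2 : ℝ) ^ ((j : ℝ) * γ)) ≤
        ν {x : ℝ | (2 : ℝ) ^ (-(j : ℤ)) ≤ |x| ∧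
          |x| < (2 : ℝ) ^ (1 - (j : ℤ))}}.Infinite) := by
  have hfin : ∀ j, ν (dyadicAnnulus j) ≠ ∞ := fun j =>
    ne_top_of_le_ne_top (ENNReal.mul_ne_top (ENNReal.pow_ne_top ENNReal.ofNat_ne_top) hν.ne)
      (measure_dyadicAnnulus_le ν j)
  refine ⟨⟨_, hν, fun j => (measure_dyadicAnnulus_le ν j).trans ?_⟩, fun γ hγ hγβ => ?_⟩
  · rw [mul_comm]
    gcongr
    norm_num
  rw [← Nat.frequently_atTop_iff_infinite]
  by_contra hrare
  have hev : ∀ᶠ j in atTop, ν (dyadicAnnulus j) ≤ ENNReal.ofReal (2 ^ γ) ^ j := by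
    filter_upwards [not_frequently.1 hrare] with j hj
    rw [← ENNReal.ofReal_pow (by positivity), ← Real.rpow_mul_natCast (by norm_num), mul_comm]
    exact (not_le.1 hj).le
  obtain ⟨δ, hγδ, hδβ⟩ := exists_between hγβ
  refine hδβ.not_ge (csInf_le ⟨0, fun _ h => h.1.le⟩ ⟨hγ.trans_lt hγδ, ?_⟩)
  exact setLIntegral_abs_rpow_lt_top_of_eventually_le hν0 hfin hγδ (hγ.trans hγδ.le) hev
end
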